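/- arXiv:2102.01654 — 5 statements merged into one kernel-verified Lean document; each statement's English description precedes it below -/
import Mathlib

section
/- Let F : ℝ → ℝ be continuous and strictly increasing with F(x+1) = F(x)+1 for all x, and suppose that for some a₀ ∈ ℝ the restriction of F to the interval [a₀, a₀+1] is strictly concave. If the rotation number ρ(F) equals p/q with p ∈ ℤ, q a positive integer and gcd(p,q) = 1, then the set P := {x ∈ [a₀, a₀+1) : F^q(x) = x + p} is nonempty, finite, and has at most 2q elements. -/
/-!
A `q`-periodic point exists because the translation number is rational. For the bound, each of
the iterates `F^[j]`, `0 < j < q`, carries `[a, a + 1)` onto an interval of length one, which meets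
the lattice `a + ℤ` once; these at most `q - 1` crossings cut `[a, a + 1)` into at most `q` pieces.
On each piece every `F^[j]`, `j < q`, lands in a single translate of `[a, a + 1)`, where `F` is
strictly concave (by `F (x + 1) = F x + 1`) and increasing, so `F^[q]` is strictly concave there
and meets the line `x ↦ x + p` at most twice.
-/

open Real Filter Set

/-- Rotation number of a lift `T` of a circle homeomorphism,
defined as the limit of `T^[n] 0 / n` (which exists and is independent
of the base point for lifts of orientation-preserving circle homeos). -/
noncomputable def rotationNumber (T : ℝ → ℝ) : ℝ :=
  limUnder atTop (fun n : ℕ => T^[n] 0 / (n : ℝ))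

/-- The expansion factor `Λ = sin(θ+α)/sin(θ−α)`. -/
noncomputable def Lam (α θ : ℝ) : ℝ := Real.sin (θ + α) / Real.sin (θ - α)

/-- The break point of increase `a₀ = (tan θ − 2ℓ)/(2 tan θ)`. -/
noncomputable def brk0 (ℓ θ : ℝ) : ℝ := (Real.tan θ - 2 * ℓ) / (2 * Real.tan θ)

/-- The break point of decrease `a₁ = −(2ℓ + tan α)/(2 tan θ)`. -/
noncomputable def brk1 (ℓ α θ : ℝ) : ℝ := -(2 * ℓ + Real.tan α) / (2 * Real.tan θ)

/-- The two-piece definition of the lift on the fundamental interval `[a₁, a₁+1)`. -/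
noncomputable def Ftrap0 (ℓ α θ x : ℝ) : ℝ :=
  if x ≤ brk0 ℓ θ then -brk1 ℓ α θ + (Lam α θ)⁻¹ * (x - brk1 ℓ α θ)
  else 1 - brk0 ℓ θ + Lam α θ * (x - brk0 ℓ θ)

/-- The lift `F_{ℓ,α,θ} : ℝ → ℝ` of the Poincaré map of the internal-wave
billiard in a rectangular trapezoid: it is given by the two-piece formula on
`[a₁, a₁+1)` and extended by `F(x+k) = F(x)+k` for `k ∈ ℤ`. -/
noncomputable def Ftrap (ℓ α θ x : ℝ) : ℝ :=
  Ftrap0 ℓ α θ (x - ⌊x - brk1 ℓ α θ⌋) + ⌊x - brk1 ℓ α θ⌋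

open Function

theorem Set.encard_le_two_of_forall_not_lt_lt {α : Type*} [LinearOrder α] {s : Set α}
    (h : ∀ x ∈ s, ∀ y ∈ s, ∀ z ∈ s, x < y → ¬y < z) : s.encard ≤ 2 := by
  by_contra! hs
  obtain ⟨t, hts, ht⟩ := exists_subset_encard_eq (Order.add_one_le_of_lt hs)
  obtain ⟨T, rfl⟩ := (finite_of_encard_eq_coe ht).exists_finset_coe
  have hT : T.card = 3 := by
    rw [encard_coe_eq_coe_finsetCard] at ht
    exact_mod_cast ht
  set e := T.orderEmbOfFin hT
  have he : ∀ i, e i ∈ s := fun i => hts (T.orderEmbOfFin_mem hT i)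
  exact h _ (he 0) _ (he 1) _ (he 2) (e.strictMono (by decide)) (e.strictMono (by decide))

theorem StrictConcaveOn.encard_setOf_eq_le_two {𝕜 β : Type*} [Field 𝕜] [LinearOrder 𝕜]
    [IsStrictOrderedRing 𝕜] [AddCommMonoid β] [LinearOrder β] [IsOrderedAddMonoid β]
    [Module 𝕜 β] [PosSMulStrictMono 𝕜 β] {s : Set 𝕜} {φ : 𝕜 → β} (hφ : StrictConcaveOn 𝕜 s φ)
    (c : β) :
    {x ∈ s | φ x = c}.encard ≤ 2 :=
  Set.encard_le_two_of_forall_not_lt_lt fun x hx y hy z hz hxy hyz => by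
    have hxz := hxy.trans hyz
    have hy' : y ∈ openSegment 𝕜 x z := by rw [openSegment_eq_Ioo hxz]; exact ⟨hxy, hyz⟩
    have := hφ.lt_on_openSegment hx.1 hz.1 hxz.ne hy'
    simp [hx.2, hy.2, hz.2] at this

theorem StrictConcaveOn.comp_of_mapsTo {𝕜 E β : Type*} [Semiring 𝕜] [PartialOrder 𝕜]
    [AddCommMonoid E] [AddCommMonoid β] [PartialOrder β] [SMul 𝕜 E] [SMul 𝕜 β]
    {s : Set E} {t : Set β} {f : E → β} {g : β → β}
    (hg : StrictConcaveOn 𝕜 t g) (hf : StrictConcaveOn 𝕜 s f) (hg' : MonotoneOn g t)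
    (hf' : s.InjOn f) (hst : MapsTo f s t) : StrictConcaveOn 𝕜 s (g ∘ f) :=
  ⟨hf.1, fun _ hx _ hy hxy _ _ ha hb hab =>
    (hg.2 (hst hx) (hst hy) (hf'.ne hx hy hxy) ha hb hab).trans_le <|
      hg' (hg.1 (hst hx) (hst hy) ha.le hb.le hab) (hst (hf.1 hx hy ha.le hb.le hab))
        (hf.2 hx hy hxy ha hb hab).le⟩

namespace CircleDeg1Lift

variable (f : CircleDeg1Lift) {a : ℝ}

theorem rotationNumber_eq_translationNumber : rotationNumber f = f.translationNumber := by
  simpa only [rotationNumber, coe_pow] using f.tendsto_translation_number₀.limUnder_eq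

theorem exists_iterate_eq_add_mem_Ico (hf : Continuous f) {p : ℤ} {q : ℕ} (hq : 0 < q)
    (h : f.translationNumber = p / q) (a : ℝ) : ∃ x ∈ Ico a (a + 1), f^[q] x = x + p := by
  obtain ⟨x, hx⟩ := (f.translationNumber_eq_rat_iff hf hq).mp h
  refine ⟨x - ⌊x - a⌋, ⟨?_, ?_⟩, ?_⟩
  · linarith [Int.floor_le (x - a)]
  · linarith [Int.lt_floor_add_one (x - a)]
  · rw [← coe_pow, map_sub_int, hx]
    ring

variable {f}

theorem strictConcaveOn_Icc_add_int (hconc : StrictConcaveOn ℝ (Icc a (a + 1)) f) (k : ℤ) :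
    StrictConcaveOn ℝ (Icc (a + k) (a + k + 1)) f := by
  have h := (hconc.translate_right (-k : ℝ)).add_const (k : ℝ)
  rw [preimage_const_add_Icc] at h
  refine (h.congr fun x _ => ?_).subset ?_ (convex_Icc _ _)
  · simp only [Pi.add_apply, comp_apply]
    rw [← Int.cast_neg, map_int_add]
    push_cast
    ring
  · exact fun x hx => ⟨by linarith [hx.1], by linarith [hx.2]⟩

theorem strictConcaveOn_iterate (hmono : StrictMono f)
    (hconc : StrictConcaveOn ℝ (Icc a (a + 1)) f) {s : Set ℝ} (hs : Convex ℝ s) {n : ℕ}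
    (hn : 0 < n) (h : ∀ j < n, ∃ k : ℤ, MapsTo f^[j] s (Icc (a + k) (a + k + 1))) :
    StrictConcaveOn ℝ s f^[n] := by
  induction n, hn using Nat.le_induction with
  | base =>
    obtain ⟨k, hk⟩ := h 0 one_pos
    exact (strictConcaveOn_Icc_add_int hconc k).subset hk hs
  | succ n hn ih =>
    obtain ⟨k, hk⟩ := h n n.lt_succ_self
    rw [iterate_succ']
    exact (strictConcaveOn_Icc_add_int hconc k).comp_of_mapsTo
      (ih fun j hj => h j (hj.trans n.lt_succ_self)) (hmono.monotone.monotoneOn _)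
      (hmono.iterate n).injective.injOn hk

variable (f) in
/-- `⌊f^[j] x - a⌋` is the `m` with `f^[j] x ∈ [a + m, a + m + 1)`. Summed over `0 < j < q`, its
level sets in `[a, a + 1)` are the pieces on which no `f^[j]`, `j < q`, crosses `a + ℤ`. -/
noncomputable def wrapSum (a : ℝ) (q : ℕ) (x : ℝ) : ℤ :=
  ∑ j ∈ Finset.Ico 1 q, ⌊f^[j] x - a⌋

variable {q : ℕ}

theorem wrapSum_mono : Monotone (f.wrapSum a q) := fun _ _ hxy =>
  Finset.sum_le_sum fun j _ => Int.floor_le_floor (by linarith [f.monotone.iterate j hxy])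

theorem wrapSum_mem_Icc (hq : 0 < q) {x : ℝ} (hx : x ∈ Icc a (a + 1)) :
    f.wrapSum a q x ∈ Finset.Icc (f.wrapSum a q a) (f.wrapSum a q a + q - 1) := by
  refine Finset.mem_Icc.mpr ⟨wrapSum_mono hx.1, ?_⟩
  calc f.wrapSum a q x ≤ f.wrapSum a q (a + 1) := wrapSum_mono hx.2
    _ = ∑ j ∈ Finset.Ico 1 q, (⌊f^[j] a - a⌋ + 1) := by
      refine Finset.sum_congr rfl fun j _ => ?_
      rw [← coe_pow, ← Int.cast_one, map_add_int, coe_pow, Int.cast_one, add_sub_right_comm,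
        Int.floor_add_one]
    _ = f.wrapSum a q a + (q - 1 : ℕ) := by simp [wrapSum, Finset.sum_add_distrib]
    _ = f.wrapSum a q a + q - 1 := by rw [Nat.cast_sub hq]; ring

theorem floor_iterate_sub_eq_of_wrapSum_eq {x y : ℝ} (hx : x ∈ Ico a (a + 1))
    (hy : y ∈ Ico a (a + 1)) (hxy : f.wrapSum a q x = f.wrapSum a q y) {j : ℕ} (hj : j < q) :
    ⌊f^[j] x - a⌋ = ⌊f^[j] y - a⌋ := by
  wlog hle : x ≤ y generalizing x y
  · exact (this hy hx hxy.symm (le_of_not_ge hle)).symm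
  rcases Nat.eq_zero_or_pos j with rfl | hj₀
  · simp only [iterate_zero, id_eq]
    rw [Int.floor_eq_zero_iff.mpr ⟨by linarith [hx.1], by linarith [hx.2]⟩,
      Int.floor_eq_zero_iff.mpr ⟨by linarith [hy.1], by linarith [hy.2]⟩]
  · have hmono : ∀ i ∈ Finset.Ico 1 q, ⌊f^[i] x - a⌋ ≤ ⌊f^[i] y - a⌋ := fun i _ =>
      Int.floor_le_floor (by linarith [f.monotone.iterate i hle])
    exact (Finset.sum_eq_sum_iff_of_le hmono).mp hxy j (Finset.mem_Ico.mpr ⟨hj₀, hj⟩)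

theorem strictConcaveOn_iterate_wrapSum_fiber (hmono : StrictMono f)
    (hconc : StrictConcaveOn ℝ (Icc a (a + 1)) f) (hq : 0 < q) (k : ℤ) :
    StrictConcaveOn ℝ {x ∈ Ico a (a + 1) | f.wrapSum a q x = k} f^[q] := by
  set s := {x ∈ Ico a (a + 1) | f.wrapSum a q x = k}
  have hs : s.OrdConnected := ⟨fun x hx z hz w hw =>
    ⟨⟨hx.1.1.trans hw.1, hw.2.trans_lt hz.1.2⟩,
      le_antisymm (hz.2 ▸ wrapSum_mono hw.2) (hx.2 ▸ wrapSum_mono hw.1)⟩⟩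
  refine strictConcaveOn_iterate hmono hconc hs.convex hq fun j hj => ?_
  rcases s.eq_empty_or_nonempty with hs₀ | ⟨x₀, hx₀⟩
  · exact ⟨0, hs₀ ▸ mapsTo_empty _ _⟩
  refine ⟨⌊f^[j] x₀ - a⌋, fun x hx => ?_⟩
  rw [← floor_iterate_sub_eq_of_wrapSum_eq hx.1 hx₀.1 (hx.2.trans hx₀.2.symm) hj]
  constructor <;> linarith [Int.floor_le (f^[j] x - a), Int.lt_floor_add_one (f^[j] x - a)]

theorem encard_setOf_iterate_eq_add_le (hmono : StrictMono f)
    (hconc : StrictConcaveOn ℝ (Icc a (a + 1)) f) (hq : 0 < q) (c : ℝ) :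
    {x ∈ Ico a (a + 1) | f^[q] x = x + c}.encard ≤ 2 * q := by
  set M := f.wrapSum a q a
  set fiber := fun k : ℤ => {x ∈ Ico a (a + 1) | f.wrapSum a q x = k}
  have hcover : {x ∈ Ico a (a + 1) | f^[q] x = x + c} ⊆
      ⋃ k ∈ Finset.Icc M (M + q - 1), {x ∈ fiber k | f^[q] x - x = c} := fun x hx =>
    mem_biUnion (wrapSum_mem_Icc hq (Ico_subset_Icc_self hx.1))
      ⟨⟨hx.1, rfl⟩, sub_eq_of_eq_add' hx.2⟩
  have hfiber (k : ℤ) : {x ∈ fiber k | f^[q] x - x = c}.encard ≤ 2 :=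
    have h := strictConcaveOn_iterate_wrapSum_fiber hmono hconc hq k
    (h.sub_convexOn (convexOn_id h.1)).encard_setOf_eq_le_two c
  calc _ ≤ _ := encard_le_encard hcover
    _ ≤ ∑ k ∈ Finset.Icc M (M + q - 1), 2 :=
      (Finset.set_encard_biUnion_le _ _).trans (Finset.sum_le_sum fun k _ => hfiber k)
    _ = 2 * q := by simp [Int.card_Icc, mul_comm]

end CircleDeg1Lift

theorem stmt1_general (F : ℝ → ℝ) (hF : Continuous F) (hmono : StrictMono F)
    (hlift : ∀ x : ℝ, F (x + 1) = F x + 1) (a : ℝ)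
    (hconc : StrictConcaveOn ℝ (Set.Icc a (a + 1)) F)
    (p : ℤ) (q : ℕ) (hq : 0 < q)
    (hrot : rotationNumber F = (p : ℝ) / (q : ℝ)) :
    {x ∈ Set.Ico a (a + 1) | F^[q] x = x + (p : ℝ)}.Nonempty ∧
    {x ∈ Set.Ico a (a + 1) | F^[q] x = x + (p : ℝ)}.Finite ∧
    {x ∈ Set.Ico a (a + 1) | F^[q] x = x + (p : ℝ)}.ncard ≤ 2 * q := by
  let f : CircleDeg1Lift := ⟨⟨F, hmono.monotone⟩, hlift⟩
  have hτ : f.translationNumber = p / q := f.rotationNumber_eq_translationNumber ▸ hrot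
  have hcard := (f.encard_setOf_iterate_eq_add_le hmono hconc hq p).trans_eq (by norm_cast)
  exact ⟨f.exists_iterate_eq_add_mem_Ico hF hq hτ a,
    Set.encard_le_coe_iff_finite_ncard_le.mp hcard⟩

/-- for a lift F of a circle homeomorphism which is strictly
concave on a fundamental interval, with rational rotation number p/q in lowest
terms, the set of q-periodic points in a fundamental domain is nonempty,
finite, with at most 2q elements. -/
theorem stmt1 (F : ℝ → ℝ) (hF : Continuous F) (hmono : StrictMono F)
    (hlift : ∀ x : ℝ, F (x + 1) = F x + 1) (a : ℝ)
    (hconc : StrictConcaveOn ℝ (Set.Icc a (a + 1)) F)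
    (p : ℤ) (q : ℕ) (hq : 0 < q) (hpq : Int.gcd p (q : ℤ) = 1)
    (hrot : rotationNumber F = (p : ℝ) / (q : ℝ)) :
    {x ∈ Set.Ico a (a + 1) | F^[q] x = x + (p : ℝ)}.Nonempty ∧
    {x ∈ Set.Ico a (a + 1) | F^[q] x = x + (p : ℝ)}.Finite ∧
    {x ∈ Set.Ico a (a + 1) | F^[q] x = x + (p : ℝ)}.ncard ≤ 2 * q :=
  stmt1_general F hF hmono hlift a hconc p q hq hrot
end

section
/- Let p be a nonnegative integer and q a positive even integer with gcd(p,q) = 1. Then ρ(F_{ℓ,α,θ}) = p/q if, and only if, F_{ℓ,α,θ}^q(a₀) = a₀ + p. -/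
open Real Filter Set

/-!
Let `P` be the closed, invariant set of points with `F^[q] x = x + p`; it is nonempty when
`ρ = p / q`. Suppose that neither `a₀` nor `a₁` lies in `P` and take a complementary interval
`(u, v)` of `P`. No point of the orbits of `u` and `v` is a break point, so `F^[q]` is affine near
`u` and near `v`, with slope `Λ ^ (e - (q - e))` where `e` counts the visits of the orbit to the
expanding arc. As `F^[q] - id - p` has no zero on `(u, v)`, the two slopes lie on different sides
of `1`; since `q` is even, the two counts differ by at least `2`. Each index at which they differ
is a time `j` at which `F^[j] (u, v)` contains a break point; but because `p / q` is in lowest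
terms, the intervals `F^[j] (u, v)`, `j < q`, are pairwise disjoint modulo `1`, so this happens at
most once for each of the two break points. Hence `a₀` or `a₁` lies in `P`, and the time reversal
`x ↦ -F x` carries the orbit of `a₁` to that of `a₀` (here `p` is odd). The converse is the
classical criterion for rational rotation numbers.
-/

open Topology

def HasLocalSlope (f : ℝ → ℝ) (s x : ℝ) : Prop :=
  ∀ᶠ y in 𝓝 x, f y = f x + s * (y - x)

namespace HasLocalSlope

variable {f g : ℝ → ℝ} {a b x : ℝ}

theorem tendsto (h : HasLocalSlope f a x) : Tendsto f (𝓝 x) (𝓝 (f x)) := by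
  have hlin : Tendsto (fun y => f x + a * (y - x)) (𝓝 x) (𝓝 (f x)) := by
    simpa using ((continuous_sub_right x).const_mul a |>.const_add (f x)).tendsto x
  exact hlin.congr' (h.mono fun _ hy => hy.symm)

theorem comp (hf : HasLocalSlope f b (g x)) (hg : HasLocalSlope g a x) :
    HasLocalSlope (f ∘ g) (b * a) x := by
  filter_upwards [hg, hg.tendsto.eventually hf] with y hgy hfy
  show f (g y) = f (g x) + _
  rw [hfy, hgy]
  ring

theorem iterate {s : ℕ → ℝ} {n : ℕ} (h : ∀ j < n, HasLocalSlope f (s j) (f^[j] x)) :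
    HasLocalSlope f^[n] (∏ j ∈ Finset.range n, s j) x := by
  induction n with
  | zero => exact Eventually.of_forall fun y => by simp
  | succ n ih =>
    rw [Finset.prod_range_succ, mul_comm, Function.iterate_succ']
    exact (h n n.lt_succ_self).comp (ih fun j hj => h j (hj.trans n.lt_succ_self))

theorem sub_id_sub (h : HasLocalSlope f a x) (c : ℝ) :
    HasLocalSlope (fun y => f y - y - c) (a - 1) x :=
  h.mono fun y hy => by
    show f y - y - c = f x - x - c + _
    rw [hy]
    ring

end HasLocalSlope

theorem mul_neg_of_hasLocalSlope {g : ℝ → ℝ} {u v a b : ℝ} (huv : u < v)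
    (hg : ContinuousOn g (Ioo u v)) (hne : ∀ y ∈ Ioo u v, g y ≠ 0) (hgu : g u = 0)
    (hgv : g v = 0) (ha : HasLocalSlope g a u) (hb : HasLocalSlope g b v) : a * b < 0 := by
  obtain ⟨y₀, hgy₀, hy₀⟩ := ((ha.filter_mono nhdsWithin_le_nhds).and
    (Ioo_mem_nhdsGT huv : ∀ᶠ y in 𝓝[>] u, y ∈ Ioo u v)).exists
  obtain ⟨y₁, hgy₁, hy₁⟩ := ((hb.filter_mono nhdsWithin_le_nhds).and
    (Ioo_mem_nhdsLT huv : ∀ᶠ y in 𝓝[<] v, y ∈ Ioo u v)).exists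
  rw [hgu, zero_add] at hgy₀
  rw [hgv, zero_add] at hgy₁
  have hsign : 0 < g y₀ * g y₁ := by
    by_contra! hle
    have hzero : ∀ y z, y ∈ Ioo u v → z ∈ Ioo u v → g y ≤ 0 → 0 ≤ g z → False := by
      intro y z hy hz hgy hgz
      obtain ⟨c, hc, hgc⟩ := isPreconnected_Ioo.intermediate_value hy hz hg ⟨hgy, hgz⟩
      exact hne c hc hgc
    rcases mul_nonpos_iff.1 hle with ⟨h₀, h₁⟩ | ⟨h₀, h₁⟩
    · exact hzero y₁ y₀ hy₁ hy₀ h₁ h₀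
    · exact hzero y₀ y₁ hy₀ hy₁ h₀ h₁
  rw [hgy₀, hgy₁] at hsign
  nlinarith [mul_pos (sub_pos.2 hy₀.1) (sub_pos.2 hy₁.2)]

structure IsGap (S : Set ℝ) (u v : ℝ) : Prop where
  left_mem : u ∈ S
  right_mem : v ∈ S
  lt : u < v
  notMem : ∀ x ∈ Ioo u v, x ∉ S

namespace IsGap

variable {S : Set ℝ} {u v u' v' : ℝ}

theorem left_eq (h : IsGap S u v) (h' : IsGap S u' v') {x : ℝ} (hx : x ∈ Ioo u v)
    (hx' : x ∈ Ioo u' v') : u = u' := by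
  by_contra hne
  rcases lt_or_gt_of_ne hne with hlt | hlt
  · exact h.notMem u' ⟨hlt, hx'.1.trans hx.2⟩ h'.left_mem
  · exact h'.notMem u ⟨hlt, hx.1.trans hx'.2⟩ h.left_mem

theorem map {g : ℝ → ℝ} (hg : StrictMono g) (hgs : Function.Surjective g)
    (hS : ∀ x, g x ∈ S ↔ x ∈ S) (h : IsGap S u v) : IsGap S (g u) (g v) where
  left_mem := (hS u).2 h.left_mem
  right_mem := (hS v).2 h.right_mem
  lt := hg h.lt
  notMem y hy hyS := by
    obtain ⟨x, rfl⟩ := hgs y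
    exact h.notMem x ⟨hg.lt_iff_lt.1 hy.1, hg.lt_iff_lt.1 hy.2⟩ ((hS x).1 hyS)

theorem le_add_one (h : IsGap S u v) (hu : u + 1 ∈ S) : v ≤ u + 1 :=
  not_lt.1 fun hv => h.notMem _ ⟨by linarith, hv⟩ hu

end IsGap

theorem exists_isGap_mem_Ioo {S : Set ℝ} (hS : IsClosed S) (hne : S.Nonempty)
    (hint : ∀ x ∈ S, ∀ n : ℤ, x + n ∈ S) {a : ℝ} (ha : a ∉ S) :
    ∃ u v, IsGap S u v ∧ a ∈ Ioo u v := by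
  obtain ⟨x, hx⟩ := hne
  have hl : (S ∩ Iic a).Nonempty := by
    refine ⟨x + (-⌈x - a⌉ : ℤ), hint x hx _, ?_⟩
    rw [mem_Iic]
    push_cast
    linarith [Int.le_ceil (x - a)]
  have hr : (S ∩ Ici a).Nonempty := by
    refine ⟨x + ⌈a - x⌉, hint x hx _, ?_⟩
    rw [mem_Ici]
    linarith [Int.le_ceil (a - x)]
  have hlb : BddAbove (S ∩ Iic a) := ⟨a, fun _ hy => hy.2⟩
  have hrb : BddBelow (S ∩ Ici a) := ⟨a, fun _ hy => hy.2⟩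
  have hu := (hS.inter isClosed_Iic).csSup_mem hl hlb
  have hv := (hS.inter isClosed_Ici).csInf_mem hr hrb
  have hua : sSup (S ∩ Iic a) < a := hu.2.lt_of_ne fun h => ha (h ▸ hu.1)
  have hav : a < sInf (S ∩ Ici a) := hv.2.lt_of_ne' fun h => ha (h ▸ hv.1)
  refine ⟨_, _, ⟨hu.1, hv.1, hua.trans hav, fun y hy hyS => ?_⟩, hua, hav⟩
  rcases le_total y a with hya | hya
  · exact (le_csSup hlb ⟨hyS, hya⟩).not_gt hy.1
  · exact (csInf_le hrb ⟨hyS, hya⟩).not_gt hy.2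

namespace CircleDeg1Lift

def periodicSet (f : CircleDeg1Lift) (p : ℤ) (q : ℕ) : Set ℝ := {x | (f ^ q) x = x + p}

variable {f : CircleDeg1Lift} {p : ℤ} {q : ℕ} {x : ℝ}

theorem add_int_mem_periodicSet_iff (n : ℤ) :
    x + n ∈ f.periodicSet p q ↔ x ∈ f.periodicSet p q := by
  show (f ^ q) (x + n) = x + n + p ↔ (f ^ q) x = x + p
  rw [map_add_int]
  constructor <;> intro h <;> linarith

theorem pow_apply_mem_periodicSet (hx : x ∈ f.periodicSet p q) (j : ℕ) :
    (f ^ j) x ∈ f.periodicSet p q := by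
  show (f ^ q) ((f ^ j) x) = (f ^ j) x + p
  rw [← mul_apply, pow_mul_comm, mul_apply, hx, map_add_int]

theorem pow_apply_mem_periodicSet_iff (hf : StrictMono f) (j : ℕ) :
    (f ^ j) x ∈ f.periodicSet p q ↔ x ∈ f.periodicSet p q := by
  refine ⟨fun hx => ?_, fun hx => pow_apply_mem_periodicSet hx j⟩
  have hinj : Function.Injective (f ^ j) := by
    rw [coe_pow]
    exact (hf.iterate j).injective
  apply hinj
  show (f ^ j) ((f ^ q) x) = (f ^ j) (x + p)
  rw [← mul_apply, pow_mul_comm, mul_apply, hx, map_add_int]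

theorem isClosed_periodicSet (hf : Continuous f) : IsClosed (f.periodicSet p q) :=
  isClosed_eq (f.continuous_pow hf q) (by fun_prop)

theorem pow_apply_ne_add_int_of_notMem {a : ℝ} (hx : x ∈ f.periodicSet p q)
    (ha : a ∉ f.periodicSet p q) (j : ℕ) (k : ℤ) : (f ^ j) x ≠ a + k := fun h =>
  ha ((add_int_mem_periodicSet_iff k).1 (h ▸ pow_apply_mem_periodicSet hx j))

theorem pow_apply_ne_add_int_of_lt (hτ : translationNumber f = p / q) (hpq : IsCoprime p q) {d : ℕ}
    (hd : 0 < d) (hdq : d < q) (y : ℝ) (r : ℤ) : (f ^ d) y ≠ y + r := by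
  intro h
  have hτ' := f.translationNumber_of_map_pow_eq_add_int h hd
  rw [hτ, div_eq_div_iff (by exact_mod_cast (hd.trans hdq).ne') (by exact_mod_cast hd.ne')] at hτ'
  have hdvd : (q : ℤ) ∣ p * d := ⟨r, by exact_mod_cast hτ'.trans (mul_comm _ _)⟩
  have := Int.le_of_dvd (by positivity) (hpq.symm.dvd_of_dvd_mul_left hdvd)
  omega

end CircleDeg1Lift

namespace IsGap

open CircleDeg1Lift

variable {f : CircleDeg1Lift} {p : ℤ} {q : ℕ} {u v : ℝ}

theorem add_int (h : IsGap (f.periodicSet p q) u v) (n : ℤ) :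
    IsGap (f.periodicSet p q) (u + n) (v + n) :=
  h.map (strictMono_id.add_const _) (fun y => ⟨y - n, sub_add_cancel y n⟩)
    fun _ => add_int_mem_periodicSet_iff n

theorem pow_apply (hf : StrictMono f) (hc : Continuous f)
    (h : IsGap (f.periodicSet p q) u v) (j : ℕ) :
    IsGap (f.periodicSet p q) ((f ^ j) u) ((f ^ j) v) := by
  refine h.map ?_ ?_ fun _ => pow_apply_mem_periodicSet_iff hf j <;> rw [coe_pow]
  · exact hf.iterate j
  · exact (f.continuous_iff_surjective.1 hc).iterate j

/-- Distinct images of a gap under `f ^ j`, `j < q`, are disjoint modulo `1`: otherwise they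
coincide up to an integer translation, giving a periodic orbit of period less than `q`. -/
theorem eq_of_add_int_mem (hf : StrictMono f) (hc : Continuous f)
    (hτ : translationNumber f = p / q) (hpq : IsCoprime p q) (h : IsGap (f.periodicSet p q) u v)
    {i j : ℕ} (hi : i < q) (hj : j < q) {c : ℝ} {ki kj : ℤ}
    (hci : c + ki ∈ Ioo ((f ^ i) u) ((f ^ i) v)) (hcj : c + kj ∈ Ioo ((f ^ j) u) ((f ^ j) v)) :
    i = j := by
  wlog hij : i ≤ j generalizing i j ki kj
  · exact (this hj hi hcj hci (le_of_not_ge hij)).symm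
  rcases hij.eq_or_lt with rfl | hij
  · rfl
  have hshift : (f ^ i) u = (f ^ j) u + (ki - kj : ℤ) :=
    (h.pow_apply hf hc i).left_eq ((h.pow_apply hf hc j).add_int (ki - kj)) hci
      (by push_cast; constructor <;> linarith [hcj.1, hcj.2])
  refine absurd ?_ (pow_apply_ne_add_int_of_lt hτ hpq (Nat.sub_pos_of_lt hij)
    ((Nat.sub_le j i).trans_lt hj) ((f ^ i) u) (kj - ki))
  rw [← mul_apply, ← pow_add, Nat.sub_add_cancel hij.le, hshift]
  push_cast
  ring

theorem card_le_one (hf : StrictMono f) (hc : Continuous f)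
    (hτ : translationNumber f = p / q) (hpq : IsCoprime p q) (h : IsGap (f.periodicSet p q) u v)
    {s : Finset ℕ} (hs : s ⊆ Finset.range q) (c : ℝ)
    (hcs : ∀ j ∈ s, ∃ k : ℤ, c + k ∈ Ioo ((f ^ j) u) ((f ^ j) v)) : s.card ≤ 1 := by
  refine Finset.card_le_one.2 fun i hi j hj => ?_
  obtain ⟨ki, hki⟩ := hcs i hi
  obtain ⟨kj, hkj⟩ := hcs j hj
  exact h.eq_of_add_int_mem hf hc hτ hpq (Finset.mem_range.1 (hs hi))
    (Finset.mem_range.1 (hs hj)) hki hkj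

end IsGap

def periodicIoo (a b : ℝ) : Set ℝ := ⋃ k : ℤ, Ioo (a + k) (b + k)

theorem mem_periodicIoo {a b x : ℝ} : x ∈ periodicIoo a b ↔ ∃ k : ℤ, x ∈ Ioo (a + k) (b + k) :=
  mem_iUnion

theorem periodicIoo_add_one (a b : ℝ) : periodicIoo (a + 1) (b + 1) = periodicIoo a b := by
  ext x
  simp only [mem_periodicIoo]
  constructor
  · rintro ⟨k, hk⟩
    exact ⟨k + 1, by push_cast; constructor <;> linarith [hk.1, hk.2]⟩
  · rintro ⟨k, hk⟩
    exact ⟨k - 1, by push_cast; constructor <;> linarith [hk.1, hk.2]⟩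

theorem exists_add_int_mem_Ioo {a b t s : ℝ} (ht : t ∈ periodicIoo a b)
    (hs : s ∈ periodicIoo b (a + 1)) (hts : t < s) (hst : s ≤ t + 1) :
    ∃ k : ℤ, b + k ∈ Ioo t s := by
  obtain ⟨k, hk⟩ := mem_periodicIoo.1 ht
  obtain ⟨k', hk'⟩ := mem_periodicIoo.1 hs
  have h₁ : (k' : ℝ) < k + 1 := by linarith [hk.2, hk'.1]
  have h₂ : (k : ℝ) < k' + 1 := by linarith [hk.1, hk'.2]
  obtain rfl : k' = k := by
    have h₁ : k' < k + 1 := by exact_mod_cast h₁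
    have h₂ : k < k' + 1 := by exact_mod_cast h₂
    omega
  exact ⟨k', hk.2, hk'.1⟩

theorem pow_mul_inv_pow_lt_one_iff {L : ℝ} (hL : 1 < L) {a b : ℕ} :
    L ^ a * L⁻¹ ^ b < 1 ↔ a < b := by
  rw [inv_pow, mul_inv_lt_iff₀ (pow_pos (zero_lt_one.trans hL) b), one_mul]
  exact pow_lt_pow_iff_right₀ hL

theorem one_lt_pow_mul_inv_pow_iff {L : ℝ} (hL : 1 < L) {a b : ℕ} :
    1 < L ^ a * L⁻¹ ^ b ↔ b < a := by
  rw [inv_pow, lt_mul_inv_iff₀ (pow_pos (zero_lt_one.trans hL) b), one_mul]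
  exact pow_lt_pow_iff_right₀ hL

theorem exists_int_mem_Icc (A B x : ℝ) :
    ∃ k : ℤ, x ∈ Icc (B + k) (A + k) ∨ x ∈ Icc (A + k) (B + 1 + k) := by
  refine ⟨⌊x - B⌋, ?_⟩
  have h₁ := Int.floor_le (x - B)
  have h₂ := Int.lt_floor_add_one (x - B)
  rcases le_total x (A + ⌊x - B⌋) with h | h
  · exact Or.inl ⟨by linarith, h⟩
  · exact Or.inr ⟨h, by linarith⟩

theorem mem_periodicIoo_of_notMem {A B x : ℝ} (hA : ∀ k : ℤ, x ≠ A + k)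
    (hB : ∀ k : ℤ, x ≠ B + k) (hx : x ∉ periodicIoo A (B + 1)) : x ∈ periodicIoo B A := by
  obtain ⟨k, hk | hk⟩ := exists_int_mem_Icc A B x
  · exact mem_periodicIoo.2 ⟨k, hk.1.lt_of_ne' (hB k), hk.2.lt_of_ne (hA k)⟩
  · refine absurd (mem_periodicIoo.2 ⟨k, hk.1.lt_of_ne' (hA k), hk.2.lt_of_ne fun h => ?_⟩) hx
    exact hB (k + 1) (by push_cast; linarith)

/-- The lift of the paper, with `A = a₀`, `B = a₁` and `L = Λ`. On the closed expanding interval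
the formula follows from `mul_sub` (`map_expanding_Icc`). -/
structure IsTwoSlopeLift (F : ℝ → ℝ) (A B L : ℝ) : Prop where
  one_lt : 1 < L
  lt : B < A
  mul_sub : L * (1 + B - A) = A - B
  map_contracting : ∀ k : ℤ, ∀ x ∈ Icc (B + k) (A + k), F x = k - B + L⁻¹ * (x - (B + k))
  map_expanding : ∀ k : ℤ, ∀ x ∈ Ioo (A + k) (B + 1 + k), F x = k + 1 - A + L * (x - (A + k))

open Classical in
noncomputable def expandingTimes (F : ℝ → ℝ) (A B : ℝ) (n : ℕ) (x : ℝ) : Finset ℕ :=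
  (Finset.range n).filter fun j => F^[j] x ∈ periodicIoo A (B + 1)

theorem card_expandingTimes_le (F : ℝ → ℝ) (A B : ℝ) (n : ℕ) (x : ℝ) :
    (expandingTimes F A B n x).card ≤ n := by
  classical
  exact (Finset.card_filter_le _ _).trans (Finset.card_range n).le

theorem mem_expandingTimes {F : ℝ → ℝ} {A B : ℝ} {n j : ℕ} {x : ℝ} :
    j ∈ expandingTimes F A B n x ↔ j < n ∧ F^[j] x ∈ periodicIoo A (B + 1) := by
  unfold expandingTimes
  simp only [Finset.mem_filter, Finset.mem_range]

namespace IsTwoSlopeLift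

open CircleDeg1Lift

variable {F : ℝ → ℝ} {A B L : ℝ} (hF : IsTwoSlopeLift F A B L)
include hF

theorem pos : 0 < L := zero_lt_one.trans hF.one_lt

theorem lt_add_one : A < B + 1 := by
  have := pos_of_mul_pos_right (hF.mul_sub ▸ sub_pos.2 hF.lt) hF.pos.le
  linarith

theorem inv_mul_sub : L⁻¹ * (A - B) = 1 + B - A := by
  rw [← hF.mul_sub, inv_mul_cancel_left₀ hF.pos.ne']

theorem map_expanding_Icc (k : ℤ) (x : ℝ) (hx : x ∈ Icc (A + k) (B + 1 + k)) :
    F x = k + 1 - A + L * (x - (A + k)) := by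
  rcases hx.1.eq_or_lt with rfl | h₁
  · rw [hF.map_contracting k _ ⟨by linarith [hF.lt], le_rfl⟩, add_sub_add_right_eq_sub,
      hF.inv_mul_sub]
    ring
  rcases hx.2.eq_or_lt with rfl | h₂
  · rw [hF.map_contracting (k + 1) _ (by push_cast; constructor <;> linarith [hF.lt])]
    push_cast
    linear_combination -hF.mul_sub
  exact hF.map_expanding k x ⟨h₁, h₂⟩

theorem map_left : F B = -B := by
  simpa using hF.map_contracting 0 B ⟨by simp, by simpa using hF.lt.le⟩

theorem map_add_int (x : ℝ) (n : ℤ) : F (x + n) = F x + n := by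
  obtain ⟨k, hk | hk⟩ := exists_int_mem_Icc A B x
  · rw [hF.map_contracting k x hk, hF.map_contracting (k + n) (x + n)
      (by push_cast; constructor <;> linarith [hk.1, hk.2])]
    push_cast
    ring
  · rw [hF.map_expanding_Icc k x hk, hF.map_expanding_Icc (k + n) (x + n)
      (by push_cast; constructor <;> linarith [hk.1, hk.2])]
    push_cast
    ring

theorem strictMonoOn_Icc (k : ℤ) : StrictMonoOn F (Icc (B + k) (B + 1 + k)) := by
  have hAk : A + k ∈ Icc (B + k) (B + 1 + k) := ⟨by linarith [hF.lt], by linarith [hF.lt_add_one]⟩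
  rw [← Icc_union_Icc_eq_Icc hAk.1 hAk.2]
  refine StrictMonoOn.union (c := A + k) (fun x hx y hy hxy => ?_) (fun x hx y hy hxy => ?_)
    (isGreatest_Icc hAk.1) (isLeast_Icc hAk.2)
  · rw [hF.map_contracting k x hx, hF.map_contracting k y hy]
    have := mul_lt_mul_of_pos_left (sub_lt_sub_right hxy (B + k)) (inv_pos.2 hF.pos)
    linarith
  · rw [hF.map_expanding_Icc k x hx, hF.map_expanding_Icc k y hy]
    have := mul_lt_mul_of_pos_left (sub_lt_sub_right hxy (A + k)) hF.pos
    linarith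

theorem strictMono : StrictMono F := by
  have hmem (x : ℝ) : x ∈ Icc (B + ⌊x - B⌋) (B + 1 + ⌊x - B⌋) :=
    ⟨by linarith [Int.floor_le (x - B)], by linarith [Int.lt_floor_add_one (x - B)]⟩
  have hleft (k : ℤ) : F (B + k) = k - B := by
    rw [hF.map_add_int, hF.map_left]
    ring
  intro x y hxy
  rcases (Int.floor_mono (sub_le_sub_right hxy.le B)).eq_or_lt with hk | hk
  · exact hF.strictMonoOn_Icc _ (hmem x) (hk ▸ hmem y) hxy
  have hk' : (⌊x - B⌋ : ℝ) + 1 ≤ ⌊y - B⌋ := by exact_mod_cast hk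
  calc F x < F (B + ((⌊x - B⌋ + 1 : ℤ) : ℝ)) := by
        push_cast
        exact hF.strictMonoOn_Icc _ (hmem x) (by constructor <;> linarith [(hmem x).1])
          (by linarith [Int.lt_floor_add_one (x - B)])
    _ ≤ F (B + ⌊y - B⌋) := by
        rw [hleft, hleft]
        push_cast
        linarith
    _ ≤ F y := (hF.strictMonoOn_Icc _).monotoneOn (left_mem_Icc.2 (by linarith)) (hmem y)
        (hmem y).1

/-- `x ↦ -F x` is an involution: the time reversal of the billiard. -/
theorem map_neg_map (x : ℝ) : F (-F x) = -x := by
  have hmono := hF.strictMono.monotone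
  obtain ⟨k, hk | hk⟩ := exists_int_mem_Icc A B x
  · have hFx := hF.map_contracting k x hk
    have hmem : -F x ∈ Icc (A + (-k - 1 : ℤ)) (B + 1 + (-k - 1 : ℤ)) := by
      have h₁ := hmono hk.1
      have h₂ := hmono hk.2
      rw [hF.map_contracting k _ ⟨le_rfl, by linarith [hF.lt]⟩] at h₁
      rw [hF.map_expanding_Icc k _ ⟨le_rfl, by linarith [hF.lt_add_one]⟩] at h₂
      push_cast
      constructor <;> linarith
    rw [hF.map_expanding_Icc _ _ hmem, hFx]
    push_cast
    linear_combination hF.mul_sub - (x - B - k) * mul_inv_cancel₀ hF.pos.ne'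
  · have hFx := hF.map_expanding_Icc k x hk
    have hmem : -F x ∈ Icc (B + (-k - 1 : ℤ)) (A + (-k - 1 : ℤ)) := by
      have h₁ := hmono hk.1
      have h₂ := hmono hk.2
      rw [hF.map_expanding_Icc k _ ⟨le_rfl, by linarith [hF.lt_add_one]⟩] at h₁
      rw [hF.map_expanding_Icc k _ ⟨by linarith [hF.lt_add_one], le_rfl⟩] at h₂
      push_cast
      constructor <;> linarith [hF.mul_sub]
    rw [hF.map_contracting _ _ hmem, hFx]
    push_cast
    linear_combination hF.inv_mul_sub - (x - A - k) * inv_mul_cancel₀ hF.pos.ne'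

theorem iterate_neg_iterate (n : ℕ) (x : ℝ) : F^[n] (-F^[n] x) = -x := by
  induction n generalizing x with
  | zero => rfl
  | succ n ih =>
    rw [Function.iterate_succ_apply, Function.iterate_succ_apply', hF.map_neg_map, ih]

theorem surjective : Function.Surjective F :=
  fun y => ⟨-F (-y), by rw [hF.map_neg_map, neg_neg]⟩

theorem continuous : Continuous F :=
  hF.strictMono.monotone.continuous_of_surjective hF.surjective

def toLift : CircleDeg1Lift :=
  ⟨⟨F, hF.strictMono.monotone⟩, fun x => by simpa using hF.map_add_int x 1⟩

theorem coe_toLift_pow (n : ℕ) : ⇑(hF.toLift ^ n) = F^[n] := by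
  rw [CircleDeg1Lift.coe_pow]
  rfl

theorem rotationNumber_eq : rotationNumber F = CircleDeg1Lift.translationNumber hF.toLift :=
  hF.toLift.tendsto_translation_number₀.congr (fun n => by rw [hF.coe_toLift_pow]) |>.limUnder_eq

theorem mem_periodicSet_iff {p : ℤ} {q : ℕ} {x : ℝ} :
    x ∈ hF.toLift.periodicSet p q ↔ F^[q] x = x + p := by
  show (hF.toLift ^ q) x = x + p ↔ _
  rw [coe_toLift_pow]

theorem hasLocalSlope_of_mem_contracting {x : ℝ} (hx : x ∈ periodicIoo B A) :
    HasLocalSlope F L⁻¹ x := by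
  obtain ⟨k, hk⟩ := mem_periodicIoo.1 hx
  filter_upwards [Ioo_mem_nhds hk.1 hk.2] with y hy
  rw [hF.map_contracting k y (Ioo_subset_Icc_self hy),
    hF.map_contracting k x (Ioo_subset_Icc_self hk)]
  ring

theorem hasLocalSlope_of_mem_expanding {x : ℝ} (hx : x ∈ periodicIoo A (B + 1)) :
    HasLocalSlope F L x := by
  obtain ⟨k, hk⟩ := mem_periodicIoo.1 hx
  filter_upwards [Ioo_mem_nhds hk.1 hk.2] with y hy
  rw [hF.map_expanding k y hy, hF.map_expanding k x hk]
  ring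

theorem hasLocalSlope_iterate {x : ℝ} (hA : ∀ (j : ℕ) (k : ℤ), F^[j] x ≠ A + k)
    (hB : ∀ (j : ℕ) (k : ℤ), F^[j] x ≠ B + k) (n : ℕ) :
    HasLocalSlope F^[n]
      (L ^ (expandingTimes F A B n x).card * L⁻¹ ^ (n - (expandingTimes F A B n x).card)) x := by
  classical
  have h := HasLocalSlope.iterate (f := F) (x := x) (n := n)
    (s := fun j => if F^[j] x ∈ periodicIoo A (B + 1) then L else L⁻¹) fun j _ => by
      split_ifs with hj
      · exact hF.hasLocalSlope_of_mem_expanding hj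
      · exact hF.hasLocalSlope_of_mem_contracting
          (mem_periodicIoo_of_notMem (hA j) (hB j) hj)
  have hcard := Finset.card_filter_add_card_filter_not (s := Finset.range n)
    (fun j => F^[j] x ∈ periodicIoo A (B + 1))
  rw [Finset.card_range, ← expandingTimes] at hcard
  rwa [Finset.prod_ite, Finset.prod_const, Finset.prod_const, ← expandingTimes,
    show _ = n - _ from Nat.eq_sub_of_add_eq' hcard] at h

theorem iterate_add_int (n : ℕ) (x : ℝ) (k : ℤ) : F^[n] (x + k) = F^[n] x + k := by
  rw [← hF.coe_toLift_pow, (hF.toLift ^ n).map_add_int]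

variable {p : ℤ} {q : ℕ} {u v : ℝ}

/-- Since `F^[q] - id - p` has no zero on the gap, its slopes `L ^ e * L⁻¹ ^ (q - e) - 1` at the
two ends have opposite signs. -/
theorem card_expandingTimes_lt_or_lt (hgap : IsGap (hF.toLift.periodicSet p q) u v)
    (hA : A ∉ hF.toLift.periodicSet p q) (hB : B ∉ hF.toLift.periodicSet p q) {m : ℕ}
    (hqm : q = 2 * m) :
    (m < (expandingTimes F A B q u).card ∧ (expandingTimes F A B q v).card < m) ∨
      ((expandingTimes F A B q u).card < m ∧ m < (expandingTimes F A B q v).card) := by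
  have hslope (x : ℝ) (hx : x ∈ hF.toLift.periodicSet p q) :=
    (hF.hasLocalSlope_iterate (x := x)
      (fun j k => by simpa [coe_toLift_pow] using pow_apply_ne_add_int_of_notMem hx hA j k)
      (fun j k => by simpa [coe_toLift_pow] using pow_apply_ne_add_int_of_notMem hx hB j k)
      q).sub_id_sub p
  have hzero (x : ℝ) (hx : x ∈ hF.toLift.periodicSet p q) : F^[q] x - x - p = 0 := by
    rw [hF.mem_periodicSet_iff.1 hx]
    ring
  have hsign := mul_neg_of_hasLocalSlope (g := fun y => F^[q] y - y - p) hgap.lt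
    (((hF.continuous.iterate q).sub continuous_id).sub continuous_const).continuousOn
    (fun y hy hy0 => hgap.notMem y hy (hF.mem_periodicSet_iff.2 (by linarith)))
    (hzero u hgap.left_mem) (hzero v hgap.right_mem) (hslope u hgap.left_mem)
    (hslope v hgap.right_mem)
  have hu := card_expandingTimes_le F A B q u
  have hv := card_expandingTimes_le F A B q v
  rcases mul_neg_iff.1 hsign with ⟨h₁, h₂⟩ | ⟨h₁, h₂⟩
  · have h₁ := (one_lt_pow_mul_inv_pow_iff hF.one_lt).1 (sub_pos.1 h₁)
    have h₂ := (pow_mul_inv_pow_lt_one_iff hF.one_lt).1 (sub_neg.1 h₂)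
    omega
  · have h₁ := (pow_mul_inv_pow_lt_one_iff hF.one_lt).1 (sub_neg.1 h₁)
    have h₂ := (one_lt_pow_mul_inv_pow_iff hF.one_lt).1 (sub_pos.1 h₂)
    omega

/-- At an index in one of these differences, the orbits of `u` and `v` lie on different sides of
a break point, so `F^[j] (u, v)` contains a translate of it; by `IsGap.card_le_one` this happens at
most once. -/
theorem card_sdiff_expandingTimes_le_one (hτ : translationNumber hF.toLift = p / q)
    (hpq : IsCoprime p q) (hgap : IsGap (hF.toLift.periodicSet p q) u v)
    (hA : A ∉ hF.toLift.periodicSet p q) (hB : B ∉ hF.toLift.periodicSet p q) :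
    (expandingTimes F A B q u \ expandingTimes F A B q v).card ≤ 1 ∧
      (expandingTimes F A B q v \ expandingTimes F A B q u).card ≤ 1 := by
  have horbit (j : ℕ) : F^[j] u < F^[j] v ∧ F^[j] v ≤ F^[j] u + 1 := by
    have h := hgap.pow_apply hF.strictMono hF.continuous j
    rw [hF.coe_toLift_pow] at h
    exact ⟨h.lt, h.le_add_one (by exact_mod_cast (add_int_mem_periodicSet_iff 1).2 h.left_mem)⟩
  have hcontr {x : ℝ} (hx : x ∈ hF.toLift.periodicSet p q) {j : ℕ} (hj : j < q)
      (hjx : j ∉ expandingTimes F A B q x) : F^[j] x ∈ periodicIoo B A :=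
    mem_periodicIoo_of_notMem
      (fun k => by simpa [coe_toLift_pow] using pow_apply_ne_add_int_of_notMem hx hA j k)
      (fun k => by simpa [coe_toLift_pow] using pow_apply_ne_add_int_of_notMem hx hB j k)
      fun h => hjx (mem_expandingTimes.2 ⟨hj, h⟩)
  have hsub (x y : ℝ) : expandingTimes F A B q x \ expandingTimes F A B q y ⊆ Finset.range q :=
    fun j hj => Finset.mem_range.2 (mem_expandingTimes.1 (Finset.mem_sdiff.1 hj).1).1
  constructor
  · refine hgap.card_le_one hF.strictMono hF.continuous hτ hpq (hsub u v) (B + 1) fun j hj => ?_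
    obtain ⟨hju, hjv⟩ := Finset.mem_sdiff.1 hj
    rw [hF.coe_toLift_pow]
    refine exists_add_int_mem_Ioo (mem_expandingTimes.1 hju).2 ?_ (horbit j).1 (horbit j).2
    rw [periodicIoo_add_one]
    exact hcontr hgap.right_mem (mem_expandingTimes.1 hju).1 hjv
  · refine hgap.card_le_one hF.strictMono hF.continuous hτ hpq (hsub v u) A fun j hj => ?_
    obtain ⟨hjv, hju⟩ := Finset.mem_sdiff.1 hj
    rw [hF.coe_toLift_pow]
    exact exists_add_int_mem_Ioo (hcontr hgap.left_mem (mem_expandingTimes.1 hjv).1 hju)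
      (mem_expandingTimes.1 hjv).2 (horbit j).1 (horbit j).2

theorem mem_or_mem_periodicSet {m : ℕ} (hqm : q = 2 * m) (hq : 0 < q)
    (hτ : translationNumber hF.toLift = p / q) (hpq : IsCoprime p q) :
    A ∈ hF.toLift.periodicSet p q ∨ B ∈ hF.toLift.periodicSet p q := by
  by_contra! h
  obtain ⟨u, v, hgap, -⟩ := exists_isGap_mem_Ioo (isClosed_periodicSet hF.continuous)
    ((translationNumber_eq_rat_iff _ hF.continuous hq).1 hτ)
    (fun x hx n => (add_int_mem_periodicSet_iff n).2 hx) h.1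
  have hsign := hF.card_expandingTimes_lt_or_lt hgap h.1 h.2 hqm
  have hcross := hF.card_sdiff_expandingTimes_le_one hτ hpq hgap h.1 h.2
  have := Finset.card_le_card_sdiff_add_card (s := expandingTimes F A B q u)
    (t := expandingTimes F A B q v)
  have := Finset.card_le_card_sdiff_add_card (s := expandingTimes F A B q v)
    (t := expandingTimes F A B q u)
  omega

/-- Since `F B = -B`, time reversal gives `F^[m] (-F y) = B` for `y = F^[m] B`, hence
`F^[2 * m] (-F y) = y = F^[2 * m] (y - p)` and `F y + y = p`; for odd `p` this forces
`y = A + (p - 1) / 2`. -/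
theorem mem_periodicSet_of_mem {m : ℕ} (hp : Odd p)
    (hB : B ∈ hF.toLift.periodicSet p (2 * m)) : A ∈ hF.toLift.periodicSet p (2 * m) := by
  obtain ⟨r, rfl⟩ := hp
  set y := F^[m] B
  have hy : y ∈ hF.toLift.periodicSet (2 * r + 1) (2 * m) := by
    simpa [coe_toLift_pow] using pow_apply_mem_periodicSet hB m
  have h₁ : F^[m] (-F y) = B := by
    have := hF.iterate_neg_iterate m (F B)
    rwa [← Function.iterate_succ_apply, Function.iterate_succ_apply', hF.map_left, neg_neg]
      at this
  have h₂ : F^[2 * m] (-F y) = y := by rw [two_mul, Function.iterate_add_apply, h₁]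
  have h₃ : F^[2 * m] (y + (-(2 * r + 1) : ℤ)) = y := by
    rw [hF.iterate_add_int, hF.mem_periodicSet_iff.1 hy]
    push_cast
    ring
  have h₄ : -F y = y + (-(2 * r + 1) : ℤ) :=
    (hF.strictMono.iterate _).injective (h₂.trans h₃.symm)
  have h₅ : F (A + r) = r + 1 - A := by
    rw [hF.map_expanding_Icc r _ ⟨le_rfl, by linarith [hF.lt_add_one]⟩]
    ring
  have h₆ : y = A + r := (hF.strictMono.add strictMono_id).injective <| by
    push_cast at h₄
    simp only [id_eq, h₅]
    linarith
  simpa [h₆] using (add_int_mem_periodicSet_iff (-r)).2 hy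

theorem rotationNumber_eq_div_iff {p q : ℕ} (hq : 0 < q) (heven : Even q)
    (hpq : Nat.Coprime p q) : rotationNumber F = p / q ↔ F^[q] A = A + p := by
  have hiff := hF.mem_periodicSet_iff (p := p) (q := q) (x := A)
  rw [Int.cast_natCast] at hiff
  rw [hF.rotationNumber_eq, ← hiff, ← Int.cast_natCast p]
  refine ⟨fun hτ => ?_, fun hA => (translationNumber_eq_rat_iff _ hF.continuous hq).2 ⟨A, hA⟩⟩
  obtain ⟨m, rfl⟩ := even_iff_exists_two_mul.1 heven
  have hodd : Odd (p : ℤ) :=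
    (Int.odd_coe_nat p).2 (hpq.coprime_dvd_right (dvd_mul_right 2 m)).odd_of_right
  exact (hF.mem_or_mem_periodicSet rfl hq hτ (Nat.isCoprime_iff_coprime.2 hpq)).elim id
    (hF.mem_periodicSet_of_mem hodd)

end IsTwoSlopeLift

theorem Ftrap_eq_of_mem_Ico {ℓ α θ x : ℝ} (k : ℤ)
    (hx : x ∈ Ico (brk1 ℓ α θ + k) (brk1 ℓ α θ + 1 + k)) :
    Ftrap ℓ α θ x = Ftrap0 ℓ α θ (x - k) + k := by
  rw [Ftrap, Int.floor_eq_iff.2 ⟨by linarith [hx.1], by linarith [hx.2]⟩]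

section Trapezoid

variable {ℓ α θ : ℝ} (hα : 0 < α) (hαθ : α < θ) (hθ : θ < π / 2)
include hα hαθ hθ

theorem tan_mem_Ioo : tan α ∈ Ioo 0 (tan θ) :=
  ⟨tan_pos_of_pos_of_lt_pi_div_two hα (hαθ.trans hθ),
    tan_lt_tan_of_lt_of_lt_pi_div_two (by linarith [pi_pos]) hθ hαθ⟩

theorem Lam_eq_tan : Lam α θ = (tan θ + tan α) / (tan θ - tan α) := by
  have hcα := (cos_pos_of_mem_Ioo ⟨by linarith [pi_pos], hαθ.trans hθ⟩).ne'
  have hcθ := (cos_pos_of_mem_Ioo ⟨by linarith [pi_pos], hθ⟩).ne'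
  have hs : sin (θ - α) ≠ 0 :=
    (sin_pos_of_pos_of_lt_pi (sub_pos.2 hαθ) (by linarith [pi_pos])).ne'
  rw [Lam, div_eq_div_iff hs (sub_pos.2 (tan_mem_Ioo hα hαθ hθ).2).ne', tan_eq_sin_div_cos,
    tan_eq_sin_div_cos, sin_add, sin_sub]
  field_simp

theorem one_lt_Lam : 1 < Lam α θ := by
  obtain ⟨hS, hST⟩ := tan_mem_Ioo hα hαθ hθ
  rw [Lam_eq_tan hα hαθ hθ, one_lt_div (sub_pos.2 hST)]
  linarith

theorem brk1_lt_brk0 : brk1 ℓ α θ < brk0 ℓ θ := by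
  obtain ⟨hS, hST⟩ := tan_mem_Ioo hα hαθ hθ
  rw [brk0, brk1, div_lt_div_iff_of_pos_right (by linarith)]
  linarith

theorem brk0_lt_brk1_add_one : brk0 ℓ θ < brk1 ℓ α θ + 1 := by
  obtain ⟨hS, hST⟩ := tan_mem_Ioo hα hαθ hθ
  rw [brk0, brk1, div_add_one (by linarith), div_lt_div_iff_of_pos_right (by linarith)]
  linarith

theorem Lam_mul_sub : Lam α θ * (1 + brk1 ℓ α θ - brk0 ℓ θ) = brk0 ℓ θ - brk1 ℓ α θ := by
  obtain ⟨hS, hST⟩ := tan_mem_Ioo hα hαθ hθ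
  have hT : tan θ ≠ 0 := by linarith
  have hTS : tan θ - tan α ≠ 0 := by linarith
  rw [Lam_eq_tan hα hαθ hθ, brk0, brk1]
  field_simp
  ring

theorem isTwoSlopeLift_Ftrap :
    IsTwoSlopeLift (Ftrap ℓ α θ) (brk0 ℓ θ) (brk1 ℓ α θ) (Lam α θ) where
  one_lt := one_lt_Lam hα hαθ hθ
  lt := brk1_lt_brk0 hα hαθ hθ
  mul_sub := Lam_mul_sub hα hαθ hθ
  map_contracting k x hx := by
    rw [Ftrap_eq_of_mem_Ico k ⟨hx.1, by linarith [hx.2, brk0_lt_brk1_add_one (ℓ := ℓ) hα hαθ hθ]⟩,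
      Ftrap0, if_pos (by linarith [hx.2])]
    ring
  map_expanding k x hx := by
    rw [Ftrap_eq_of_mem_Ico k ⟨by linarith [hx.1, brk1_lt_brk0 (ℓ := ℓ) hα hαθ hθ], hx.2⟩, Ftrap0,
      if_neg (by linarith [hx.1])]
    ring

end Trapezoid

theorem stmt6_general (ℓ α θ : ℝ) (hα : 0 < α) (hαθ : α < θ)
    (hθ : θ < π / 2)
    (p q : ℕ) (hq : 0 < q) (heven : Even q) (hpq : Nat.Coprime p q) :
    rotationNumber (Ftrap ℓ α θ) = (p : ℝ) / (q : ℝ) ↔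
      (Ftrap ℓ α θ)^[q] (brk0 ℓ θ) = brk0 ℓ θ + (p : ℝ) :=
  (isTwoSlopeLift_Ftrap hα hαθ hθ).rotationNumber_eq_div_iff hq heven hpq

/-- for p/q in lowest terms with q even,
ρ(F_{ℓ,α,θ}) = p/q if and only if F^[q](a₀) = a₀ + p. -/
theorem stmt6 (ℓ α θ : ℝ) (hℓ : 0 < ℓ) (hα : 0 < α) (hαθ : α < θ)
    (hθ : θ < π / 2) (htan : Real.tan θ > 2 * ℓ + Real.tan α)
    (p q : ℕ) (hq : 0 < q) (heven : Even q) (hpq : Nat.Coprime p q) :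
    rotationNumber (Ftrap ℓ α θ) = (p : ℝ) / (q : ℝ) ↔
      (Ftrap ℓ α θ)^[q] (brk0 ℓ θ) = brk0 ℓ θ + (p : ℝ) :=
  stmt6_general ℓ α θ hα hαθ hθ p q hq heven hpq
end

section
/- Fix ℓ > 0 and α ∈ (0, π/2), and let r = p/q with p a nonnegative integer, q a positive ODD integer and gcd(p,q) = 1 (p = 0, q = 1 allowed). If there exists θ* ∈ (arctan(2ℓ + tan α), π/2) with ρ(F_{ℓ,α,θ*}) = r, then the set {θ ∈ (arctan(2ℓ + tan α), π/2) : ρ(F_{ℓ,α,θ}) = r} is an interval with nonempty interior; moreover, for every such θ the circle map is not topologically conjugate to a rotation, i.e., there is no continuous strictly increasing H : ℝ → ℝ with H(x+1) = H(x)+1 and H(F_{ℓ,α,θ}(x)) = H(x) + r for all x. -/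
open Real Filter Set

/-!
As `θ` increases the lifts `F_θ` decrease pointwise, so `θ ↦ ρ(F_θ)` is antitone and each of
its level sets is an interval.

Off the countably many backward orbits of the break points, every `F_θ` is locally affine with
slope `Λ` or `Λ⁻¹`, so `F_θ^q` has slope an odd power of `Λ ≠ 1` there when `q` is odd. Hence
`F_θ^q` is never the translation by `p`, which a conjugacy to the rotation by `p/q` would force.

If `ρ(F_θ*) = p/q`, there is an `x₀` with `F_θ*^q x₀ = x₀ + p` and, by the above, a generic `y`
with, say, `F_θ*^q y < y + p`. This strict inequality survives for nearby `θ`, since `F_θ^q y`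
depends continuously on `θ` along a generic orbit, while for `θ < θ*` monotonicity gives
`F_θ^q x₀ ≥ x₀ + p`. Together they pin `ρ(F_θ) = p/q` on a whole interval `(θ* - ε, θ*)`.
-/

open Function Topology

theorem strictMono_extend_by_floor {g : ℝ → ℝ} (hg : StrictMono g) {b : ℝ}
    (hb : g (b + 1) = g b + 1) : StrictMono fun x => g (x - ⌊x - b⌋) + ⌊x - b⌋ := by
  intro x y hxy
  have hk : ⌊x - b⌋ ≤ ⌊y - b⌋ := Int.floor_mono (by linarith)
  rcases hk.lt_or_eq with hk | hk
  · have hx : g (x - ⌊x - b⌋) < g b + 1 :=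
      hb ▸ hg (by linarith [Int.lt_floor_add_one (x - b)])
    have hy : g b ≤ g (y - ⌊y - b⌋) := hg.monotone (by linarith [Int.floor_le (y - b)])
    have : (⌊x - b⌋ : ℝ) + 1 ≤ ⌊y - b⌋ := by exact_mod_cast hk
    dsimp only
    linarith
  · dsimp only
    rw [hk]
    exact add_lt_add_left (hg (by linarith)) _

theorem continuous_extend_by_floor {g : ℝ → ℝ} (hg : Continuous g) {b : ℝ}
    (hb : g (b + 1) = g b + 1) : Continuous fun x => g (x - ⌊x - b⌋) + ⌊x - b⌋ := by
  set G : ℝ → ℝ := fun s => g (b + s) - (b + s)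
  have hG : Continuous (G ∘ Int.fract) :=
    (hg.comp (continuous_const.add continuous_id)).sub (continuous_const.add continuous_id)
      |>.continuousOn.comp_fract'' (by simp [hb])
  have hx : ∀ x : ℝ, g (x - ⌊x - b⌋) + ⌊x - b⌋ = x + (G ∘ Int.fract) (x - b) := by
    intro x
    simp only [G, comp_apply, Int.fract]
    ring_nf
  simp only [hx]
  exact continuous_id.add (hG.comp (continuous_id.sub continuous_const))

namespace CircleDeg1Lift

theorem translationNumber_eq_div_of_le_of_le (f : CircleDeg1Lift) {p : ℤ} {q : ℕ} (hq : 0 < q)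
    {x y : ℝ} (hx : x + p ≤ (f ^ q) x) (hy : (f ^ q) y ≤ y + p) :
    f.translationNumber = p / q := by
  have h₁ := (f ^ q).le_translationNumber_of_add_int_le hx
  have h₂ := (f ^ q).translationNumber_le_of_le_add_int hy
  rw [translationNumber_pow] at h₁ h₂
  rw [eq_div_iff (by positivity)]
  linarith

theorem le_of_forall_Ico_le {f g : CircleDeg1Lift} (b : ℝ)
    (h : ∀ y ∈ Ico b (b + 1), f y ≤ g y) : f ≤ g := by
  intro x
  have hx : x - ⌊x - b⌋ ∈ Ico b (b + 1) :=
    ⟨by linarith [Int.floor_le (x - b)], by linarith [Int.lt_floor_add_one (x - b)]⟩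
  simpa only [map_sub_int, sub_le_sub_iff_right] using h _ hx

theorem ordConnected_setOf_translationNumber_eq {ι : Type*} [Preorder ι] {F : ι → CircleDeg1Lift}
    {s : Set ι} (hs : s.OrdConnected) (hF : AntitoneOn F s) (c : ℝ) :
    {a ∈ s | (F a).translationNumber = c}.OrdConnected := by
  refine ⟨fun a ha b hb x hx => ⟨hs.out ha.1 hb.1 hx, le_antisymm ?_ ?_⟩⟩
  · rw [← ha.2]
    exact translationNumber_mono (hF ha.1 (hs.out ha.1 hb.1 hx) hx.1)
  · rw [← hb.2]
    exact translationNumber_mono (hF (hs.out ha.1 hb.1 hx) hb.1 hx.2)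

theorem nonempty_interior_setOf_translationNumber_eq {F : ℝ → CircleDeg1Lift} {s : Set ℝ}
    (hs : IsOpen s) (hF : AntitoneOn F s) {θ : ℝ} (hθ : θ ∈ s) {p : ℤ} {q : ℕ} (hq : 0 < q)
    {x y : ℝ} (hx : (F θ ^ q) x = x + p) (hy : (F θ ^ q) y ≠ y + p)
    (hcont : ContinuousAt (fun θ' => (F θ' ^ q) y) θ) :
    (interior {θ' ∈ s | (F θ').translationNumber = p / q}).Nonempty := by
  set S := {θ' ∈ s | (F θ').translationNumber = p / q}
  suffices S ∈ 𝓝[<] θ ∨ S ∈ 𝓝[>] θ by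
    rcases this with h | h
    · obtain ⟨l, hl, hsub⟩ := mem_nhdsLT_iff_exists_Ioo_subset.1 h
      exact (nonempty_Ioo.2 hl).mono (interior_maximal hsub isOpen_Ioo)
    · obtain ⟨u, hu, hsub⟩ := mem_nhdsGT_iff_exists_Ioo_subset.1 h
      exact (nonempty_Ioo.2 hu).mono (interior_maximal hsub isOpen_Ioo)
  rcases hy.lt_or_gt with hlt | hgt
  · -- Moving `θ'` left raises `F θ'`, which keeps the orbit of `x` at least `p/q` fast.
    left
    filter_upwards [nhdsWithin_le_nhds (hs.mem_nhds hθ),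
      nhdsWithin_le_nhds (hcont.eventually_lt continuousAt_const hlt), self_mem_nhdsWithin]
      with θ' hθ's hθ'y hθ'θ
    refine ⟨hθ's, translationNumber_eq_div_of_le_of_le _ hq (x := x) ?_ hθ'y.le⟩
    rw [← hx]
    exact pow_mono (hF hθ's hθ (le_of_lt hθ'θ)) q x
  · right
    filter_upwards [nhdsWithin_le_nhds (hs.mem_nhds hθ),
      nhdsWithin_le_nhds (continuousAt_const.eventually_lt hcont hgt), self_mem_nhdsWithin]
      with θ' hθ's hθ'y hθ'θ
    refine ⟨hθ's, translationNumber_eq_div_of_le_of_le _ hq (y := x) hθ'y.le ?_⟩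
    rw [← hx]
    exact pow_mono (hF hθ hθ's (le_of_lt hθ'θ)) q x

end CircleDeg1Lift

theorem rotationNumber_coe (f : CircleDeg1Lift) : rotationNumber f = f.translationNumber := by
  simpa only [rotationNumber, CircleDeg1Lift.coe_pow] using
    f.tendsto_translation_number₀.limUnder_eq

theorem iterate_eq_add_of_semiconj {f H : ℝ → ℝ} (hH : Injective H)
    (hH₁ : ∀ x, H (x + 1) = H x + 1) {c : ℝ} (hHf : ∀ x, H (f x) = H x + c) {n m : ℕ}
    (hnm : n * c = m) (x : ℝ) : f^[n] x = x + m := by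
  have hf : Semiconj H f (· + c) := hHf
  have h₁ : Semiconj H (· + 1) (· + 1) := hH₁
  apply hH
  rw [hf.iterate_right n, ← nsmul_one m, ← add_right_iterate_apply, h₁.iterate_right m]
  simp [hnm]

theorem dense_setOf_forall_iterate_notMem {f : ℝ → ℝ} (hf : Injective f) {B : Set ℝ}
    (hB : B.Countable) : Dense {x | ∀ i : ℕ, f^[i] x ∉ B} := by
  have : {x | ∀ i : ℕ, f^[i] x ∉ B} = (⋃ i : ℕ, f^[i] ⁻¹' B)ᶜ := by ext; simp
  rw [this]
  exact (countable_iUnion fun i => hB.preimage (hf.iterate i)).dense_compl ℝ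

theorem continuousAt_iterate_apply {X Y : Type*} [TopologicalSpace X] [TopologicalSpace Y]
    {G : X → Y → Y} {a : X} {y : Y} (hG : ∀ i : ℕ, ContinuousAt (uncurry G) (a, (G a)^[i] y))
    (n : ℕ) : ContinuousAt (fun a' => (G a')^[n] y) a := by
  induction n with
  | zero => exact continuousAt_const
  | succ n ih =>
    simp only [iterate_succ_apply']
    exact (hG n).comp (f := fun a' => (a', (G a')^[n] y)) (continuousAt_id.prodMk ih)

theorem exists_hasDerivAt_iterate_zpow {f : ℝ → ℝ} {Λ : ℝ} (hΛ : Λ ≠ 0) {x : ℝ}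
    (hderiv : ∀ i : ℕ, ∃ e : ℤ, Odd e ∧ HasDerivAt f (Λ ^ e) (f^[i] x)) (n : ℕ) :
    ∃ m : ℤ, Even (m + n) ∧ HasDerivAt f^[n] (Λ ^ m) x := by
  induction n with
  | zero => exact ⟨0, by simp, by simpa using hasDerivAt_id x⟩
  | succ n ih =>
    obtain ⟨m, hm, hdm⟩ := ih
    obtain ⟨e, he, hde⟩ := hderiv n
    refine ⟨e + m, ?_, ?_⟩
    · simpa only [Nat.cast_succ, add_assoc] using he.add_odd hm.add_one
    · rw [iterate_succ', zpow_add₀ hΛ]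
      exact hde.comp x hdm

theorem not_forall_iterate_eq_add_of_odd {f : ℝ → ℝ} (hf : Injective f) {B : Set ℝ}
    (hB : B.Countable) {Λ : ℝ} (hΛ₀ : 0 < Λ) (hΛ₁ : Λ ≠ 1)
    (hderiv : ∀ z ∉ B, ∃ e : ℤ, Odd e ∧ HasDerivAt f (Λ ^ e) z) {q : ℕ} (hq : Odd q) (c : ℝ) :
    ¬ ∀ x, f^[q] x = x + c := by
  intro hfq
  obtain ⟨x, hx⟩ := (dense_setOf_forall_iterate_notMem hf hB).nonempty
  obtain ⟨m, hm, hdm⟩ := exists_hasDerivAt_iterate_zpow hΛ₀.ne'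
    (fun i => hderiv _ (hx i)) q
  have hd₁ : HasDerivAt f^[q] 1 x := by
    rw [funext hfq]
    exact (hasDerivAt_id x).add_const c
  have hm₀ : m = 0 := zpow_right_injective₀ hΛ₀ hΛ₁ (hdm.unique hd₁ |>.trans (zpow_zero Λ).symm)
  rw [hm₀, zero_add] at hm
  exact (Int.not_even_iff_odd.2 (by exact_mod_cast hq)) hm

namespace TrapezoidBilliard

structure Admissible (ℓ α θ : ℝ) : Prop where
  len_pos : 0 < ℓ
  α_pos : 0 < α
  α_lt : α < θ
  lt_pi_div_two : θ < π / 2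
  tan_lt : 2 * ℓ + tan α < tan θ

variable {ℓ α θ θ₁ θ₂ : ℝ}

theorem admissible_of_mem_Ioo (hℓ : 0 < ℓ) (hα : 0 < α) (hα₂ : α < π / 2)
    (hθ : θ ∈ Ioo (arctan (2 * ℓ + tan α)) (π / 2)) : Admissible ℓ α θ := by
  have hθ' : θ ∈ Ioo (-(π / 2)) (π / 2) := ⟨(neg_pi_div_two_lt_arctan _).trans hθ.1, hθ.2⟩
  have htan : 2 * ℓ + tan α < tan θ := by
    simpa only [tan_arctan] using strictMonoOn_tan (arctan_mem_Ioo _) hθ' hθ.1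
  refine ⟨hℓ, hα, ?_, hθ.2, htan⟩
  exact strictMonoOn_tan.lt_iff_lt ⟨by linarith [pi_pos], hα₂⟩ hθ' |>.1 (by linarith)

noncomputable def lowerBranch (ℓ α θ x : ℝ) : ℝ := -brk1 ℓ α θ + (Lam α θ)⁻¹ * (x - brk1 ℓ α θ)

noncomputable def upperBranch (ℓ α θ x : ℝ) : ℝ := 1 - brk0 ℓ θ + Lam α θ * (x - brk0 ℓ θ)

theorem Ftrap0_eq_ite (x : ℝ) : Ftrap0 ℓ α θ x =
    if x ≤ brk0 ℓ θ then lowerBranch ℓ α θ x else upperBranch ℓ α θ x := rfl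

def breakSet (ℓ α θ : ℝ) : Set ℝ :=
  (range fun k : ℤ => brk0 ℓ θ + k) ∪ range fun k : ℤ => brk1 ℓ α θ + k

theorem countable_breakSet : (breakSet ℓ α θ).Countable :=
  (countable_range _).union (countable_range _)

theorem Ftrap_add_int (x : ℝ) (k : ℤ) : Ftrap ℓ α θ (x + k) = Ftrap ℓ α θ x + k := by
  rw [Ftrap, Ftrap, show x + k - brk1 ℓ α θ = x - brk1 ℓ α θ + k by ring, Int.floor_add_intCast]
  push_cast
  ring_nf

theorem Ftrap_eq_of_mem {k : ℤ} {x : ℝ} (h₁ : brk1 ℓ α θ + k ≤ x)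
    (h₂ : x < brk1 ℓ α θ + k + 1) : Ftrap ℓ α θ x = Ftrap0 ℓ α θ (x - k) + k := by
  rw [Ftrap, Int.floor_eq_iff.2 ⟨by linarith, by linarith⟩]

namespace Admissible

theorem mem_Ioo (h : Admissible ℓ α θ) : θ ∈ Ioo (-(π / 2)) (π / 2) :=
  ⟨by linarith [pi_pos, h.α_pos, h.α_lt], h.lt_pi_div_two⟩

theorem tan_α_pos (h : Admissible ℓ α θ) : 0 < tan α :=
  tan_pos_of_pos_of_lt_pi_div_two h.α_pos (h.α_lt.trans h.lt_pi_div_two)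

theorem tan_α_lt (h : Admissible ℓ α θ) : tan α < tan θ := by
  linarith [h.tan_lt, h.len_pos]

theorem tan_pos (h : Admissible ℓ α θ) : 0 < tan θ := h.tan_α_pos.trans h.tan_α_lt

theorem lam_eq (h : Admissible ℓ α θ) : Lam α θ = (tan θ + tan α) / (tan θ - tan α) := by
  have hθ := (cos_pos_of_mem_Ioo h.mem_Ioo).ne'
  have hα : cos α ≠ 0 :=
    (cos_pos_of_mem_Ioo ⟨by linarith [pi_pos, h.α_pos], h.α_lt.trans h.lt_pi_div_two⟩).ne'
  rw [Lam, sin_add, sin_sub, tan_eq_sin_div_cos, tan_eq_sin_div_cos]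
  field_simp

theorem one_lt_lam (h : Admissible ℓ α θ) : 1 < Lam α θ := by
  rw [h.lam_eq, one_lt_div (by linarith [h.tan_α_lt])]
  linarith [h.tan_α_pos]

theorem lam_pos (h : Admissible ℓ α θ) : 0 < Lam α θ := one_pos.trans h.one_lt_lam

theorem brk1_mem_Ioo (h : Admissible ℓ α θ) : brk1 ℓ α θ ∈ Ioo (-(1 / 2)) 0 := by
  have ht := h.tan_pos
  rw [brk1, Set.mem_Ioo, lt_div_iff₀ (by linarith), div_neg_iff]
  constructor
  · linarith [h.tan_lt]
  · exact Or.inr ⟨by linarith [h.len_pos, h.tan_α_pos], by linarith⟩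

theorem brk1_lt_brk0 (h : Admissible ℓ α θ) : brk1 ℓ α θ < brk0 ℓ θ := by
  rw [brk1, brk0, div_lt_div_iff_of_pos_right (by linarith [h.tan_pos])]
  linarith [h.tan_pos, h.tan_α_pos]

theorem brk0_lt_brk1_add_one (h : Admissible ℓ α θ) : brk0 ℓ θ < brk1 ℓ α θ + 1 := by
  have ht := h.tan_pos.ne'
  have : brk1 ℓ α θ + 1 - brk0 ℓ θ = (tan θ - tan α) / (2 * tan θ) := by
    rw [brk1, brk0]
    field_simp
    ring
  linarith [div_pos (sub_pos.2 h.tan_α_lt) (by linarith [h.tan_pos] : 0 < 2 * tan θ)]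

theorem lam_mul_sub (h : Admissible ℓ α θ) :
    Lam α θ * (brk1 ℓ α θ + 1 - brk0 ℓ θ) = brk0 ℓ θ - brk1 ℓ α θ := by
  have ht := h.tan_pos.ne'
  have htα : tan θ - tan α ≠ 0 := (sub_pos.2 h.tan_α_lt).ne'
  rw [h.lam_eq, brk0, brk1]
  field_simp
  ring

theorem continuousAt_tan (h : Admissible ℓ α θ) : ContinuousAt tan θ :=
  Real.continuousAt_tan.2 (cos_pos_of_mem_Ioo h.mem_Ioo).ne'

theorem continuousAt_brk0 (h : Admissible ℓ α θ) : ContinuousAt (brk0 ℓ) θ :=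
  (h.continuousAt_tan.sub continuousAt_const).div (continuousAt_const.mul h.continuousAt_tan)
    (by linarith [h.tan_pos])

theorem continuousAt_brk1 (h : Admissible ℓ α θ) : ContinuousAt (brk1 ℓ α) θ :=
  continuousAt_const.div (continuousAt_const.mul h.continuousAt_tan) (by linarith [h.tan_pos])

theorem continuousAt_lam (h : Admissible ℓ α θ) : ContinuousAt (Lam α) θ :=
  (continuous_sin.comp (continuous_add_const α)).continuousAt.div
    (continuous_sin.comp (continuous_sub_right α)).continuousAt
    (sin_pos_of_pos_of_lt_pi (by linarith [h.α_lt])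
      (by linarith [pi_pos, h.lt_pi_div_two, h.α_pos])).ne'

theorem eventually_admissible (h : Admissible ℓ α θ) : ∀ᶠ θ' in 𝓝 θ, Admissible ℓ α θ' := by
  filter_upwards [lt_mem_nhds h.α_lt, gt_mem_nhds h.lt_pi_div_two,
    h.continuousAt_tan.eventually (lt_mem_nhds h.tan_lt)] with θ' h₁ h₂ h₃
  exact ⟨h.len_pos, h.α_pos, h₁, h₂, h₃⟩

theorem lowerBranch_eq (h : Admissible ℓ α θ) (x : ℝ) :
    lowerBranch ℓ α θ x = 1 - brk0 ℓ θ + (Lam α θ)⁻¹ * (x - brk0 ℓ θ) := by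
  rw [lowerBranch]
  linear_combination (-(Lam α θ)⁻¹) * h.lam_mul_sub +
    (brk1 ℓ α θ + 1 - brk0 ℓ θ) * inv_mul_cancel₀ h.lam_pos.ne'

theorem upperBranch_eq (h : Admissible ℓ α θ) (x : ℝ) :
    upperBranch ℓ α θ x = 1 - brk1 ℓ α θ + Lam α θ * (x - (brk1 ℓ α θ + 1)) := by
  rw [upperBranch]
  linear_combination h.lam_mul_sub

theorem Ftrap0_eq_max (h : Admissible ℓ α θ) (x : ℝ) :
    Ftrap0 ℓ α θ x = max (lowerBranch ℓ α θ x) (upperBranch ℓ α θ x) := by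
  have hΛ : (Lam α θ)⁻¹ < Lam α θ :=
    (inv_lt_one_of_one_lt₀ h.one_lt_lam).trans h.one_lt_lam
  rw [Ftrap0_eq_ite, h.lowerBranch_eq, upperBranch]
  split_ifs with hx
  · rw [max_eq_left]
    nlinarith
  · rw [max_eq_right]
    nlinarith

theorem strictMono_Ftrap0 (h : Admissible ℓ α θ) : StrictMono (Ftrap0 ℓ α θ) := by
  have hΛ := h.lam_pos
  intro x y hxy
  simp only [h.Ftrap0_eq_max, lowerBranch, upperBranch]
  apply max_lt_max <;> gcongr

theorem continuous_Ftrap0 (h : Admissible ℓ α θ) : Continuous (Ftrap0 ℓ α θ) := by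
  simp only [funext h.Ftrap0_eq_max, lowerBranch, upperBranch]
  fun_prop

theorem Ftrap0_brk1_add_one (h : Admissible ℓ α θ) :
    Ftrap0 ℓ α θ (brk1 ℓ α θ + 1) = Ftrap0 ℓ α θ (brk1 ℓ α θ) + 1 := by
  rw [Ftrap0_eq_ite, Ftrap0_eq_ite, if_neg h.brk0_lt_brk1_add_one.not_ge,
    if_pos h.brk1_lt_brk0.le, h.upperBranch_eq, lowerBranch]
  ring

theorem strictMono_Ftrap (h : Admissible ℓ α θ) : StrictMono (Ftrap ℓ α θ) :=
  strictMono_extend_by_floor h.strictMono_Ftrap0 h.Ftrap0_brk1_add_one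

theorem continuous_Ftrap (h : Admissible ℓ α θ) : Continuous (Ftrap ℓ α θ) :=
  continuous_extend_by_floor h.continuous_Ftrap0 h.Ftrap0_brk1_add_one

end Admissible

open Classical in
/-- Outside the admissible range the value `1` is junk. -/
noncomputable def trapLift (ℓ α θ : ℝ) : CircleDeg1Lift :=
  if h : Admissible ℓ α θ then
    ⟨⟨Ftrap ℓ α θ, h.strictMono_Ftrap.monotone⟩, fun x => by exact_mod_cast Ftrap_add_int x 1⟩
  else 1

theorem Admissible.coe_trapLift (h : Admissible ℓ α θ) : ⇑(trapLift ℓ α θ) = Ftrap ℓ α θ := by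
  rw [trapLift, dif_pos h]
  rfl

namespace Admissible

theorem tan_le_tan (h₁ : Admissible ℓ α θ₁) (h₂ : Admissible ℓ α θ₂) (hθ : θ₁ ≤ θ₂) :
    tan θ₁ ≤ tan θ₂ :=
  strictMonoOn_tan.monotoneOn h₁.mem_Ioo h₂.mem_Ioo hθ

theorem brk1_le_brk1 (h₁ : Admissible ℓ α θ₁) (h₂ : Admissible ℓ α θ₂) (hθ : θ₁ ≤ θ₂) :
    brk1 ℓ α θ₁ ≤ brk1 ℓ α θ₂ := by
  rw [brk1, brk1, neg_div, neg_div, neg_le_neg_iff]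
  gcongr
  · linarith [h₁.len_pos, h₁.tan_α_pos]
  · linarith [h₁.tan_pos]
  · exact tan_le_tan h₁ h₂ hθ

theorem brk0_le_brk0 (h₁ : Admissible ℓ α θ₁) (h₂ : Admissible ℓ α θ₂) (hθ : θ₁ ≤ θ₂) :
    brk0 ℓ θ₁ ≤ brk0 ℓ θ₂ := by
  have ht := tan_le_tan h₁ h₂ hθ
  rw [brk0, brk0, div_le_div_iff₀ (by linarith [h₁.tan_pos]) (by linarith [h₂.tan_pos])]
  nlinarith [h₁.len_pos]

theorem lam_le_lam (h₁ : Admissible ℓ α θ₁) (h₂ : Admissible ℓ α θ₂) (hθ : θ₁ ≤ θ₂) :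
    Lam α θ₂ ≤ Lam α θ₁ := by
  have ht := tan_le_tan h₁ h₂ hθ
  rw [h₁.lam_eq, h₂.lam_eq, div_le_div_iff₀ (by linarith [h₂.tan_α_lt])
    (by linarith [h₁.tan_α_lt])]
  nlinarith [h₁.tan_α_pos]

theorem Ftrap0_le_Ftrap0 (h₁ : Admissible ℓ α θ₁) (h₂ : Admissible ℓ α θ₂) (hθ : θ₁ ≤ θ₂)
    (y : ℝ) : Ftrap0 ℓ α θ₂ y ≤ Ftrap0 ℓ α θ₁ y := by
  have ha := brk0_le_brk0 h₁ h₂ hθ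
  have hΛ := lam_le_lam h₁ h₂ hθ
  have hs : (Lam α θ₁)⁻¹ ≤ (Lam α θ₂)⁻¹ := inv_anti₀ h₂.lam_pos hΛ
  rw [Ftrap0_eq_ite, h₁.Ftrap0_eq_max, h₁.lowerBranch_eq, h₂.lowerBranch_eq, upperBranch,
    upperBranch]
  split_ifs with hya₂
  · rcases le_or_gt y (brk0 ℓ θ₁) with hya₁ | hya₁
    · refine le_max_of_le_left ?_
      linarith [mul_nonneg (sub_nonneg.2 hs) (sub_nonneg.2 hya₁),
        mul_nonneg (inv_pos.2 h₂.lam_pos).le (sub_nonneg.2 ha)]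
    · refine le_max_of_le_right ?_
      linarith [mul_nonneg (inv_pos.2 h₂.lam_pos).le (sub_nonneg.2 hya₂),
        mul_nonneg h₁.lam_pos.le (sub_nonneg.2 hya₁.le)]
  · refine le_max_of_le_right ?_
    linarith [mul_nonneg (sub_nonneg.2 hΛ) (sub_nonneg.2 (not_le.1 hya₂).le),
      mul_nonneg h₁.lam_pos.le (sub_nonneg.2 ha)]

theorem Ftrap0_le_lowerBranch_sub_one_add_one (h₁ : Admissible ℓ α θ₁)
    (h₂ : Admissible ℓ α θ₂) (hθ : θ₁ ≤ θ₂) {y : ℝ} (hy₁ : brk1 ℓ α θ₁ + 1 ≤ y)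
    (hy₂ : y < brk1 ℓ α θ₂ + 1) : Ftrap0 ℓ α θ₂ y ≤ lowerBranch ℓ α θ₁ (y - 1) + 1 := by
  rw [Ftrap0_eq_ite]
  split_ifs with hya₂
  · have ha := brk0_le_brk0 h₁ h₂ hθ
    have hs₁ := inv_lt_one_of_one_lt₀ h₁.one_lt_lam
    have hs : (Lam α θ₁)⁻¹ ≤ (Lam α θ₂)⁻¹ := inv_anti₀ h₂.lam_pos (lam_le_lam h₁ h₂ hθ)
    rw [h₁.lowerBranch_eq, h₂.lowerBranch_eq]
    linarith [mul_nonneg (sub_nonneg.2 hs) (sub_nonneg.2 hya₂),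
      mul_nonneg (inv_pos.2 h₁.lam_pos).le (sub_nonneg.2 ha)]
  · rw [lowerBranch, h₂.upperBranch_eq]
    linarith [mul_nonneg h₂.lam_pos.le (by linarith : 0 ≤ brk1 ℓ α θ₂ + 1 - y),
      mul_nonneg (inv_pos.2 h₁.lam_pos).le (by linarith : 0 ≤ y - 1 - brk1 ℓ α θ₁),
      brk1_le_brk1 h₁ h₂ hθ]

theorem Ftrap_le_Ftrap_of_mem (h₁ : Admissible ℓ α θ₁) (h₂ : Admissible ℓ α θ₂)
    (hθ : θ₁ ≤ θ₂) {y : ℝ} (hy₁ : brk1 ℓ α θ₂ ≤ y) (hy₂ : y < brk1 ℓ α θ₂ + 1) :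
    Ftrap ℓ α θ₂ y ≤ Ftrap ℓ α θ₁ y := by
  have hb := brk1_le_brk1 h₁ h₂ hθ
  have hF₂ : Ftrap ℓ α θ₂ y = Ftrap0 ℓ α θ₂ y := by
    simpa using Ftrap_eq_of_mem (k := 0) (by simpa using hy₁) (by simpa using hy₂)
  rw [hF₂]
  rcases lt_or_ge y (brk1 ℓ α θ₁ + 1) with hy | hy
  · have hF₁ : Ftrap ℓ α θ₁ y = Ftrap0 ℓ α θ₁ y := by
      simpa using Ftrap_eq_of_mem (k := 0) (by simpa using hb.trans hy₁) (by simpa using hy)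
    exact hF₁ ▸ Ftrap0_le_Ftrap0 h₁ h₂ hθ y
  · have hF₁ : Ftrap ℓ α θ₁ y = Ftrap0 ℓ α θ₁ (y - 1) + 1 := by
      exact_mod_cast Ftrap_eq_of_mem (k := 1) (by push_cast; linarith)
        (by push_cast; linarith [h₁.brk1_mem_Ioo.1, h₂.brk1_mem_Ioo.2])
    rw [hF₁, h₁.Ftrap0_eq_max]
    exact (Ftrap0_le_lowerBranch_sub_one_add_one h₁ h₂ hθ hy hy₂).trans
      (add_le_add_left (le_max_left _ _) 1)

end Admissible

theorem antitoneOn_trapLift : AntitoneOn (trapLift ℓ α) {θ | Admissible ℓ α θ} := by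
  intro θ₁ h₁ θ₂ h₂ hθ
  refine CircleDeg1Lift.le_of_forall_Ico_le (brk1 ℓ α θ₂) fun y hy => ?_
  rw [Admissible.coe_trapLift h₁, Admissible.coe_trapLift h₂]
  exact Admissible.Ftrap_le_Ftrap_of_mem h₁ h₂ hθ hy.1 hy.2

namespace Admissible

theorem eventually_Ftrap_eq_branch (h : Admissible ℓ α θ) {z : ℝ} (hz : z ∉ breakSet ℓ α θ) :
    ∃ k : ℤ,
      (∀ᶠ P : ℝ × ℝ in 𝓝 (θ, z), Ftrap ℓ α P.1 P.2 = lowerBranch ℓ α P.1 (P.2 - k) + k) ∨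
      (∀ᶠ P : ℝ × ℝ in 𝓝 (θ, z), Ftrap ℓ α P.1 P.2 = upperBranch ℓ α P.1 (P.2 - k) + k) := by
  simp only [breakSet, mem_union, mem_range, not_or, not_exists] at hz
  set k := ⌊z - brk1 ℓ α θ⌋
  have hk₁ : brk1 ℓ α θ + k < z := by
    linarith [(Int.floor_le (z - brk1 ℓ α θ)).lt_of_ne fun hk => hz.2 k (by linarith)]
  have hk₂ : z < brk1 ℓ α θ + k + 1 := by linarith [Int.lt_floor_add_one (z - brk1 ℓ α θ)]
  have hb₀ : ContinuousAt (fun P : ℝ × ℝ => brk0 ℓ P.1 + k) (θ, z) :=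
    (h.continuousAt_brk0.comp (x := (θ, z)) continuousAt_fst).add continuousAt_const
  have hb₁ : ContinuousAt (fun P : ℝ × ℝ => brk1 ℓ α P.1 + k) (θ, z) :=
    (h.continuousAt_brk1.comp (x := (θ, z)) continuousAt_fst).add continuousAt_const
  have hdom : ∀ᶠ P : ℝ × ℝ in 𝓝 (θ, z),
      brk1 ℓ α P.1 + k < P.2 ∧ P.2 < brk1 ℓ α P.1 + k + 1 :=
    (hb₁.eventually_lt continuousAt_snd hk₁).and
      (continuousAt_snd.eventually_lt (hb₁.add continuousAt_const) hk₂)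
  refine ⟨k, ?_⟩
  rcases (Ne.symm (hz.1 k)).lt_or_gt with hlt | hgt
  · left
    filter_upwards [hdom, continuousAt_snd.eventually_lt hb₀ hlt] with P hP hP₀
    rw [Ftrap_eq_of_mem hP.1.le hP.2, Ftrap0_eq_ite, if_pos (by linarith)]
  · right
    filter_upwards [hdom, hb₀.eventually_lt continuousAt_snd hgt] with P hP hP₀
    rw [Ftrap_eq_of_mem hP.1.le hP.2, Ftrap0_eq_ite, if_neg (by linarith)]

theorem continuousAt_uncurry_Ftrap (h : Admissible ℓ α θ) {z : ℝ} (hz : z ∉ breakSet ℓ α θ) :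
    ContinuousAt (uncurry (Ftrap ℓ α)) (θ, z) := by
  have hb₀ := h.continuousAt_brk0.comp (x := (θ, z)) continuousAt_fst
  have hb₁ := h.continuousAt_brk1.comp (x := (θ, z)) continuousAt_fst
  have hΛ := h.continuousAt_lam.comp (x := (θ, z)) continuousAt_fst
  have hΛ' := (h.continuousAt_lam.inv₀ h.lam_pos.ne').comp (x := (θ, z)) continuousAt_fst
  obtain ⟨k, hev | hev⟩ := h.eventually_Ftrap_eq_branch hz
  all_goals
    have hz' : ContinuousAt (fun P : ℝ × ℝ => P.2 - k) (θ, z) :=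
      continuousAt_snd.sub continuousAt_const
    refine ContinuousAt.congr ?_ (hev.mono fun P hP => hP.symm)
  · simp only [lowerBranch]
    exact (hb₁.neg.add (hΛ'.mul (hz'.sub hb₁))).add continuousAt_const
  · simp only [upperBranch]
    exact ((continuousAt_const.sub hb₀).add (hΛ.mul (hz'.sub hb₀))).add continuousAt_const

theorem hasDerivAt_Ftrap (h : Admissible ℓ α θ) {z : ℝ} (hz : z ∉ breakSet ℓ α θ) :
    ∃ e : ℤ, Odd e ∧ HasDerivAt (Ftrap ℓ α θ) (Lam α θ ^ e) z := by
  have hslice : Tendsto (fun x : ℝ => (θ, x)) (𝓝 z) (𝓝 (θ, z)) :=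
    (continuous_const.prodMk continuous_id).continuousAt
  obtain ⟨k, hev | hev⟩ := h.eventually_Ftrap_eq_branch hz
  · refine ⟨-1, by decide, HasDerivAt.congr_of_eventuallyEq ?_ (hslice.eventually hev)⟩
    simpa [lowerBranch] using ((((hasDerivAt_id z).sub_const (k : ℝ)).sub_const
      (brk1 ℓ α θ)).const_mul (Lam α θ)⁻¹).const_add (-brk1 ℓ α θ) |>.add_const (k : ℝ)
  · refine ⟨1, by decide, HasDerivAt.congr_of_eventuallyEq ?_ (hslice.eventually hev)⟩
    simpa [upperBranch] using ((((hasDerivAt_id z).sub_const (k : ℝ)).sub_const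
      (brk0 ℓ θ)).const_mul (Lam α θ)).const_add (1 - brk0 ℓ θ) |>.add_const (k : ℝ)

theorem not_forall_iterate_Ftrap_eq_add (h : Admissible ℓ α θ) {q : ℕ} (hq : Odd q) (c : ℝ) :
    ¬ ∀ x, (Ftrap ℓ α θ)^[q] x = x + c :=
  not_forall_iterate_eq_add_of_odd h.strictMono_Ftrap.injective countable_breakSet h.lam_pos
    h.one_lt_lam.ne' (fun _ => h.hasDerivAt_Ftrap) hq c

theorem exists_iterate_Ftrap_ne_add (h : Admissible ℓ α θ) {q : ℕ} (hq : Odd q) (c : ℝ) :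
    ∃ y, (∀ i : ℕ, (Ftrap ℓ α θ)^[i] y ∉ breakSet ℓ α θ) ∧ (Ftrap ℓ α θ)^[q] y ≠ y + c := by
  have hU : IsOpen {y | (Ftrap ℓ α θ)^[q] y ≠ y + c} :=
    isOpen_ne_fun (h.continuous_Ftrap.iterate q) (continuous_id.add continuous_const)
  obtain ⟨y, hy⟩ : {y | (Ftrap ℓ α θ)^[q] y ≠ y + c}.Nonempty := by
    simpa [Set.Nonempty] using h.not_forall_iterate_Ftrap_eq_add hq c
  exact (dense_setOf_forall_iterate_notMem h.strictMono_Ftrap.injective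
    countable_breakSet).exists_mem_open hU ⟨y, hy⟩

theorem continuousAt_trapLift_pow_apply (h : Admissible ℓ α θ) {y : ℝ}
    (hy : ∀ i : ℕ, (Ftrap ℓ α θ)^[i] y ∉ breakSet ℓ α θ) (n : ℕ) :
    ContinuousAt (fun θ' => (trapLift ℓ α θ' ^ n) y) θ := by
  refine (continuousAt_iterate_apply (G := Ftrap ℓ α)
    (fun i => h.continuousAt_uncurry_Ftrap (hy i)) n).congr ?_
  filter_upwards [h.eventually_admissible] with θ' hθ'
  rw [CircleDeg1Lift.coe_pow, hθ'.coe_trapLift]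

end Admissible

end TrapezoidBilliard

open TrapezoidBilliard

theorem stmt8_general (ℓ α : ℝ) (hℓ : 0 < ℓ) (hα : 0 < α) (hα2 : α < π / 2)
    (p q : ℕ) (hodd : Odd q)
    (θstar : ℝ)
    (hθstar : θstar ∈ Set.Ioo (Real.arctan (2 * ℓ + Real.tan α)) (π / 2))
    (hrot : rotationNumber (Ftrap ℓ α θstar) = (p : ℝ) / (q : ℝ)) :
    ({θ ∈ Set.Ioo (Real.arctan (2 * ℓ + Real.tan α)) (π / 2) |
        rotationNumber (Ftrap ℓ α θ) = (p : ℝ) / (q : ℝ)}.OrdConnected ∧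
     (interior {θ ∈ Set.Ioo (Real.arctan (2 * ℓ + Real.tan α)) (π / 2) |
        rotationNumber (Ftrap ℓ α θ) = (p : ℝ) / (q : ℝ)}).Nonempty) ∧
    ∀ θ ∈ Set.Ioo (Real.arctan (2 * ℓ + Real.tan α)) (π / 2),
      rotationNumber (Ftrap ℓ α θ) = (p : ℝ) / (q : ℝ) →
      ¬ ∃ H : ℝ → ℝ, Continuous H ∧ StrictMono H ∧
          (∀ x : ℝ, H (x + 1) = H x + 1) ∧
          (∀ x : ℝ, H (Ftrap ℓ α θ x) = H x + (p : ℝ) / (q : ℝ)) := by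
  set s := Ioo (arctan (2 * ℓ + tan α)) (π / 2)
  have hadm : ∀ θ ∈ s, Admissible ℓ α θ := fun θ hθ => admissible_of_mem_Ioo hℓ hα hα2 hθ
  have hanti : AntitoneOn (trapLift ℓ α) s := antitoneOn_trapLift.mono hadm
  have hS : {θ ∈ s | rotationNumber (Ftrap ℓ α θ) = p / q} =
      {θ ∈ s | (trapLift ℓ α θ).translationNumber = (p : ℤ) / q} := by
    ext θ
    refine and_congr_right fun hθ => ?_
    rw [← (hadm θ hθ).coe_trapLift, rotationNumber_coe, Int.cast_natCast]
  have hadm₀ := hadm θstar hθstar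
  refine ⟨⟨?_, ?_⟩, ?_⟩
  · rw [hS]
    exact CircleDeg1Lift.ordConnected_setOf_translationNumber_eq ordConnected_Ioo hanti _
  · obtain ⟨x, hx⟩ := ((trapLift ℓ α θstar).translationNumber_eq_rat_iff
      (hadm₀.coe_trapLift ▸ hadm₀.continuous_Ftrap) hodd.pos).1 (hS.le ⟨hθstar, hrot⟩).2
    obtain ⟨y, hyB, hy⟩ := hadm₀.exists_iterate_Ftrap_ne_add hodd p
    rw [hS]
    refine CircleDeg1Lift.nonempty_interior_setOf_translationNumber_eq isOpen_Ioo hanti hθstar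
      hodd.pos hx ?_ (hadm₀.continuousAt_trapLift_pow_apply hyB q)
    rwa [CircleDeg1Lift.coe_pow, hadm₀.coe_trapLift, Int.cast_natCast]
  · rintro θ hθ - ⟨H, -, hH, hH₁, hHF⟩
    exact (hadm θ hθ).not_forall_iterate_Ftrap_eq_add hodd p
      (iterate_eq_add_of_semiconj hH.injective hH₁ hHF (by field_simp [hodd.pos.ne']))

/-- if r = p/q with q odd (in lowest terms) is attained as a
rotation number by some parameter θ*, then the set of parameters realizing r
is an interval with nonempty interior (an Arnol'd tongue), and for every such
parameter the circle map is not topologically conjugate to a rotation. -/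
theorem stmt8 (ℓ α : ℝ) (hℓ : 0 < ℓ) (hα : 0 < α) (hα2 : α < π / 2)
    (p q : ℕ) (hq : 0 < q) (hodd : Odd q) (hpq : Nat.Coprime p q)
    (θstar : ℝ)
    (hθstar : θstar ∈ Set.Ioo (Real.arctan (2 * ℓ + Real.tan α)) (π / 2))
    (hrot : rotationNumber (Ftrap ℓ α θstar) = (p : ℝ) / (q : ℝ)) :
    ({θ ∈ Set.Ioo (Real.arctan (2 * ℓ + Real.tan α)) (π / 2) |
        rotationNumber (Ftrap ℓ α θ) = (p : ℝ) / (q : ℝ)}.OrdConnected ∧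
     (interior {θ ∈ Set.Ioo (Real.arctan (2 * ℓ + Real.tan α)) (π / 2) |
        rotationNumber (Ftrap ℓ α θ) = (p : ℝ) / (q : ℝ)}).Nonempty) ∧
    ∀ θ ∈ Set.Ioo (Real.arctan (2 * ℓ + Real.tan α)) (π / 2),
      rotationNumber (Ftrap ℓ α θ) = (p : ℝ) / (q : ℝ) →
      ¬ ∃ H : ℝ → ℝ, Continuous H ∧ StrictMono H ∧
          (∀ x : ℝ, H (x + 1) = H x + 1) ∧
          (∀ x : ℝ, H (Ftrap ℓ α θ x) = H x + (p : ℝ) / (q : ℝ)) :=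
  stmt8_general ℓ α hℓ hα hα2 p q hodd θstar hθstar hrot
end

section
/- Let T : ℝ → ℝ be continuous and strictly increasing with T(x+1) = T(x)+1 for all x (a lift of an orientation-preserving circle homeomorphism), and suppose T^q(x) = x + p for all x ∈ ℝ, for some integer q ≥ 1 and p ∈ ℤ. Then the circle map is topologically conjugate to the rotation by p/q: there exists a continuous, strictly increasing H : ℝ → ℝ with H(x+1) = H(x)+1 for all x and H(T(x)) = H(x) + p/q for all x ∈ ℝ. -/
open Real Filter Set

/-- a lift T of an orientation-preserving circle homeomorphism
with T^[q] = · + p is topologically conjugate to the rotation by p/q. -/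
theorem stmt15 (T : ℝ → ℝ) (hT : Continuous T) (hmono : StrictMono T)
    (hlift : ∀ x : ℝ, T (x + 1) = T x + 1)
    (q : ℕ) (hq : 1 ≤ q) (p : ℤ)
    (hper : ∀ x : ℝ, T^[q] x = x + (p : ℝ)) :
    ∃ H : ℝ → ℝ, Continuous H ∧ StrictMono H ∧
      (∀ x : ℝ, H (x + 1) = H x + 1) ∧
      (∀ x : ℝ, H (T x) = H x + (p : ℝ) / (q : ℝ)) := by
  have hq0 : (0:ℝ) < q := by exact_mod_cast hq
  have hlift' : ∀ (i : ℕ) (x : ℝ), T^[i] (x + 1) = T^[i] x + 1 := by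
    intro i
    induction i with
    | zero => simp
    | succ n ih =>
      intro x
      rw [Function.iterate_succ_apply, hlift x, ih, Function.iterate_succ_apply]
  have key : ∀ x : ℝ, ∑ i ∈ Finset.range q, T^[i] (T x)
      = (∑ i ∈ Finset.range q, T^[i] x) + p := by
    intro x
    have h1 : ∀ i : ℕ, T^[i] (T x) = T^[i+1] x := fun i =>
      (Function.iterate_succ_apply T i x).symm
    simp only [h1]
    have h2 := Finset.sum_range_succ' (fun i => T^[i] x) q
    have h3 := Finset.sum_range_succ (fun i => T^[i] x) q
    rw [h3] at h2
    have : (∑ i ∈ Finset.range q, T^[i+1] x)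
        = (∑ i ∈ Finset.range q, T^[i] x) + T^[q] x - T^[0] x := by
      linarith [h2]
    rw [this, hper x]
    simp only [Function.iterate_zero_apply]
    ring
  refine ⟨fun x => (∑ i ∈ Finset.range q, T^[i] x) / q, ?_, ?_, ?_, ?_⟩
  · exact (continuous_finset_sum _ fun i _ => hT.iterate i).div_const _
  · intro a b hab
    apply div_lt_div_of_pos_right ?_ hq0
    exact Finset.sum_lt_sum_of_nonempty (by simp; omega)
      (fun i _ => hmono.iterate i hab)
  · intro x
    simp only [hlift']
    rw [Finset.sum_add_distrib, Finset.sum_const, Finset.card_range,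
      nsmul_eq_mul, mul_one, add_div, div_self hq0.ne']
  · intro x
    dsimp only
    rw [key x, add_div]
end

section
/- The lift of the trapezoidal internal-wave billiard map satisfies the time-reversal symmetry F_{ℓ,α,θ}(−F_{ℓ,α,θ}(x)) = −x for all x ∈ ℝ. Equivalently, the graph of the induced circle homeomorphism is symmetric about the anti-diagonal: F_{ℓ,α,θ}(x) = y implies F_{ℓ,α,θ}(−y) = −x. -/
open Real Filter Set

/-- Abstract two-piece map on the fundamental interval. -/
noncomputable def FG0 (a0 a1 L x : ℝ) : ℝ :=
  if x ≤ a0 then -a1 + L⁻¹ * (x - a1) else 1 - a0 + L * (x - a0)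

/-- Abstract lift. -/
noncomputable def FG (a0 a1 L x : ℝ) : ℝ :=
  FG0 a0 a1 L (x - ⌊x - a1⌋) + ⌊x - a1⌋

lemma Ftrap_eq_FG (ℓ α θ x : ℝ) :
    Ftrap ℓ α θ x = FG (brk0 ℓ θ) (brk1 ℓ α θ) (Lam α θ) x := rfl

lemma FG_per (a0 a1 L x : ℝ) (n : ℤ) : FG a0 a1 L (x + n) = FG a0 a1 L x + n := by
  unfold FG
  have h : x + (n : ℝ) - a1 = (x - a1) + n := by ring
  rw [h, Int.floor_add_intCast]
  have h2 : x + (n : ℝ) - ((⌊x - a1⌋ + n : ℤ) : ℝ) = x - (⌊x - a1⌋ : ℝ) := by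
    push_cast; ring
  rw [h2]
  push_cast
  ring

lemma FG_core (a0 a1 L : ℝ) (hL : 0 < L) (hid : (a0 - a1) * (1 + L) = L)
    (x : ℝ) (hx1 : a1 ≤ x) (hx2 : x < a1 + 1) :
    FG a0 a1 L (-(FG a0 a1 L x)) = -x := by
  have hL1 : (0:ℝ) < 1 + L := by linarith
  have ha : a1 < a0 := by nlinarith
  have hd1 : a0 - a1 < 1 := by nlinarith
  have hLne : L ≠ 0 := ne_of_gt hL
  have e3 : L * (1 + a1 - a0) = a0 - a1 := by linear_combination -hid
  have e4 : L⁻¹ * (a0 - a1) = 1 - (a0 - a1) := by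
    field_simp
    linear_combination hid
  have hfloor0 : ⌊x - a1⌋ = 0 := by
    rw [Int.floor_eq_zero_iff, Set.mem_Ico]
    exact ⟨by linarith, by linarith⟩
  have hFx : FG a0 a1 L x = FG0 a0 a1 L x := by
    unfold FG; rw [hfloor0]; norm_num
  rw [hFx]
  unfold FG0
  by_cases hA : x ≤ a0
  · rw [if_pos hA]
    by_cases hxa : x = a1
    · have harg : -(-a1 + L⁻¹ * (x - a1)) = a1 := by rw [hxa]; ring
      rw [harg]
      unfold FG
      rw [sub_self, Int.floor_zero]
      rw [show a1 - ((0:ℤ):ℝ) = a1 by push_cast; ring]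
      unfold FG0
      rw [if_pos (le_of_lt ha)]
      push_cast
      rw [hxa]
      ring
    · have hx1' : a1 < x := lt_of_le_of_ne hx1 (Ne.symm hxa)
      have hu : L * (L⁻¹ * (x - a1)) = x - a1 := by field_simp
      have hpos : 0 < L⁻¹ * (x - a1) := mul_pos (inv_pos.mpr hL) (by linarith)
      have hlt1 : L⁻¹ * (x - a1) < 1 := by
        nlinarith [hu]
      have hfl : ⌊-(-a1 + L⁻¹ * (x - a1)) - a1⌋ = -1 := by
        rw [Int.floor_eq_iff]
        constructor
        · push_cast; linarith
        · push_cast; linarith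
      unfold FG
      rw [hfl]
      have hz : -(-a1 + L⁻¹ * (x - a1)) - ((-1 : ℤ) : ℝ) =
          1 + a1 - L⁻¹ * (x - a1) := by push_cast; ring
      rw [hz]
      unfold FG0
      by_cases hB : 1 + a1 - L⁻¹ * (x - a1) ≤ a0
      · rw [if_pos hB]
        have hxge : a0 ≤ x := by nlinarith [hu]
        have hx0 : x = a0 := le_antisymm hA hxge
        have e6 : L⁻¹ * (x - a1) = 1 - (a0 - a1) := by rw [hx0]; exact e4
        rw [e6, show 1 + a1 - (1 - (a0 - a1)) - a1 = a0 - a1 from by ring, e4]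
        push_cast
        linarith [hx0]
      · rw [if_neg hB]
        have hLy : L * (1 + a1 - L⁻¹ * (x - a1) - a0) =
            L * (1 + a1 - a0) - (x - a1) := by
          field_simp; ring
        push_cast
        rw [hLy, e3]
        ring
  · rw [if_neg hA]
    have hxa0 : a0 < x := lt_of_not_ge hA
    have hp1 : 0 < L * (x - a0) := mul_pos hL (by linarith)
    have hp2 : L * (x - a0) < a0 - a1 := by
      nlinarith [mul_lt_mul_of_pos_left (show x - a0 < 1 + a1 - a0 by linarith) hL]
    have hfl : ⌊-(1 - a0 + L * (x - a0)) - a1⌋ = -1 := by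
      rw [Int.floor_eq_iff]
      constructor
      · push_cast; linarith
      · push_cast; linarith
    unfold FG
    rw [hfl]
    have hz : -(1 - a0 + L * (x - a0)) - ((-1 : ℤ) : ℝ) = a0 - L * (x - a0) := by
      push_cast; ring
    rw [hz]
    unfold FG0
    rw [if_pos (by linarith : a0 - L * (x - a0) ≤ a0)]
    have hLy : L⁻¹ * (a0 - L * (x - a0) - a1) = L⁻¹ * (a0 - a1) - (x - a0) := by
      field_simp; ring
    push_cast
    rw [hLy, e4]
    ring

lemma FG_sym (a0 a1 L : ℝ) (hL : 0 < L) (hid : (a0 - a1) * (1 + L) = L) (x : ℝ) :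
    FG a0 a1 L (-(FG a0 a1 L x)) = -x := by
  set n := ⌊x - a1⌋ with hn
  have hx1 : a1 ≤ x - n := by
    have := Int.floor_le (x - a1); linarith
  have hx2 : x - n < a1 + 1 := by
    have := Int.lt_floor_add_one (x - a1); push_cast at this ⊢; linarith
  have e : FG a0 a1 L x = FG a0 a1 L (x - n) + n := by
    have h := FG_per a0 a1 L (x - n) n
    rw [show x - (n:ℝ) + n = x by ring] at h
    exact h
  rw [e]
  have e2 : -(FG a0 a1 L (x - n) + (n:ℝ)) = -(FG a0 a1 L (x - n)) + ((-n : ℤ) : ℝ) := by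
    push_cast; ring
  rw [e2, FG_per, FG_core a0 a1 L hL hid (x - n) hx1 hx2]
  push_cast; ring

/-- the time-reversal symmetry F(−F(x)) = −x of the trapezoidal
billiard lift; equivalently the graph is symmetric about the anti-diagonal. -/
theorem stmt16 (ℓ α θ : ℝ) (hℓ : 0 < ℓ) (hα : 0 < α) (hαθ : α < θ)
    (hθ : θ < π / 2) (htan : Real.tan θ > 2 * ℓ + Real.tan α) :
    (∀ x : ℝ, Ftrap ℓ α θ (-(Ftrap ℓ α θ x)) = -x) ∧
    (∀ x y : ℝ, Ftrap ℓ α θ x = y → Ftrap ℓ α θ (-y) = -x) := by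
  have hθ0 : 0 < θ := hα.trans hαθ
  have hπ : 0 < π := pi_pos
  have hcθ : 0 < Real.cos θ := Real.cos_pos_of_mem_Ioo ⟨by linarith, hθ⟩
  have hcα : 0 < Real.cos α := Real.cos_pos_of_mem_Ioo ⟨by linarith, by linarith⟩
  have hsθ : 0 < Real.sin θ := Real.sin_pos_of_pos_of_lt_pi hθ0 (by linarith)
  have hsα : 0 < Real.sin α := Real.sin_pos_of_pos_of_lt_pi hα (by linarith)
  have hsm : 0 < Real.sin (θ - α) := Real.sin_pos_of_pos_of_lt_pi (by linarith) (by linarith)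
  have hsp : 0 < Real.sin (θ + α) := Real.sin_pos_of_pos_of_lt_pi (by linarith) (by linarith)
  have hL : 0 < Lam α θ := div_pos hsp hsm
  have hmne : Real.sin θ * Real.cos α - Real.cos θ * Real.sin α ≠ 0 := by
    rw [← Real.sin_sub]; exact ne_of_gt hsm
  have htθ : 0 < Real.tan θ := by
    rw [Real.tan_eq_sin_div_cos]; exact div_pos hsθ hcθ
  have hid : (brk0 ℓ θ - brk1 ℓ α θ) * (1 + Lam α θ) = Lam α θ := by
    unfold brk0 brk1 Lam
    rw [Real.sin_add, Real.sin_sub, Real.tan_eq_sin_div_cos, Real.tan_eq_sin_div_cos]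
    field_simp
    ring
  constructor
  · intro x
    simp only [Ftrap_eq_FG]
    exact FG_sym _ _ _ hL hid x
  · intro x y h
    rw [← h]
    simp only [Ftrap_eq_FG]
    exact FG_sym _ _ _ hL hid x
end
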